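/- arXiv:1804.02547 — 6 statements merged into one kernel-verified Lean document; each statement's English description precedes it below -/
import Mathlib

section
/- The operator T_0 is an affine function, with nonnegative coefficients, of the values of w at the grid indices 0 ≤ k ≤ m+1: for every w : ℕ_0^n → ℝ and m ∈ ℕ_0^n, T_0(w)(m) = e^{−(c+λ)δ} w(m+1) + Σ_{0 ≤ k ≤ m} a_1(k,m) w(k) + a_2(m), where (extending g^δ to ℤ^n by the same formula) a_1(k,m) = ∫_0^δ λ e^{−(c+λ)t} F({α ∈ ℝ_+^n : g^δ(m−k−1) + tp < α ≤ g^δ(m−k) + tp componentwise}) dt ≥ 0, and a_2(m) = ∫_0^δ λ e^{−(c+λ)t} ( ∫_{{α : α ≤ g^δ(m)+tp}} a·( g^δ(m)+tp−α − ⟨g^δ(m)+tp−α⟩^δ ) dF(α) ) dt − ∫_0^δ e^{−(c+λ)t} R(g^δ(m)+tp) dt. -/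
open MeasureTheory Filter

noncomputable section

/-- The grid point associated with a multi-index `m`: `g^δ(m) = (p₁ δ m₁, …, pₙ δ mₙ)`. -/
def gdel (n : ℕ) (p : Fin n → ℝ) (δ : ℝ) (m : Fin n → ℕ) : Fin n → ℝ :=
  fun i => p i * δ * (m i : ℝ)

/-- The index of the closest grid point below `x`: `ρ^δ(x) = (⌊xᵢ/(δ pᵢ)⌋)ᵢ`. -/
def rho (n : ℕ) (p : Fin n → ℝ) (δ : ℝ) (x : Fin n → ℝ) : Fin n → ℕ :=
  fun i => ⌊x i / (δ * p i)⌋₊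

/-- The closest grid point below `x`: `⟨x⟩^δ = g^δ(ρ^δ(x))`. -/
def proj (n : ℕ) (p : Fin n → ℝ) (δ : ℝ) (x : Fin n → ℝ) : Fin n → ℝ :=
  gdel n p δ (rho n p δ x)

/-- `R(x) = λ ∫_{x - α ∉ ℝ₊ⁿ} υ(x,α) dF(α)`. -/
def Rpen (n : ℕ) (lam : ℝ) (F : Measure (Fin n → ℝ))
    (υ : (Fin n → ℝ) → (Fin n → ℝ) → ℝ) (x : Fin n → ℝ) : ℝ :=
  lam * ∫ α in {α : Fin n → ℝ | ¬ 0 ≤ x - α}, υ x α ∂F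

/-- The discrete integral operator `I^δ`. -/
def Idel (n : ℕ) (p a : Fin n → ℝ) (lam c δ : ℝ) (F : Measure (Fin n → ℝ))
    (w : (Fin n → ℕ) → ℝ) (m : Fin n → ℕ) : ℝ :=
  ∫ t in (0:ℝ)..δ, lam * Real.exp (-(c + lam) * t) *
    ∫ α in {α : Fin n → ℝ | α ≤ gdel n p δ m + t • p},
      (w (rho n p δ (gdel n p δ m + t • p - α)) +
        ∑ i, a i * ((gdel n p δ m + t • p - α) i
          - proj n p δ (gdel n p δ m + t • p - α) i)) ∂F

/-- The no-dividend operator `T₀`. -/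
def T0 (n : ℕ) (p a : Fin n → ℝ) (lam c δ : ℝ) (F : Measure (Fin n → ℝ))
    (υ : (Fin n → ℝ) → (Fin n → ℝ) → ℝ) (w : (Fin n → ℕ) → ℝ) (m : Fin n → ℕ) : ℝ :=
  w (m + 1) * Real.exp (-(c + lam) * δ) + Idel n p a lam c δ F w m
    - ∫ t in (0:ℝ)..δ, Real.exp (-(c + lam) * t) * Rpen n lam F υ (gdel n p δ m + t • p)

/-- The dividend-payment operator `Tᵢ` of company `i` (requires `m i > 0`). -/
def Ti (n : ℕ) (p a : Fin n → ℝ) (δ : ℝ) (i : Fin n) (w : (Fin n → ℕ) → ℝ)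
    (m : Fin n → ℕ) : ℝ :=
  w (m - Pi.single i 1) + δ * a i * p i

/-- The switch operator `Tₛ`. -/
def Ts (n : ℕ) (p : Fin n → ℝ) (δ : ℝ) (f : (Fin n → ℝ) → ℝ) (w : (Fin n → ℕ) → ℝ)
    (m : Fin n → ℕ) : ℝ :=
  f (gdel n p δ m)

/-- The Bellman operator `T = max{T₀, (Tᵢ over i with mᵢ>0), Tₛ}`. -/
def Tbell (n : ℕ) (p a : Fin n → ℝ) (lam c δ : ℝ) (F : Measure (Fin n → ℝ))
    (υ : (Fin n → ℝ) → (Fin n → ℝ) → ℝ) (f : (Fin n → ℝ) → ℝ)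
    (w : (Fin n → ℕ) → ℝ) (m : Fin n → ℕ) : ℝ :=
  sSup ({T0 n p a lam c δ F υ w m, Ts n p δ f w m} ∪
    (fun i => Ti n p a δ i w m) '' {i | 0 < m i})


/-- The coefficient `a₁(k,m)`, with `g^δ` extended to `ℤⁿ` by the same formula. -/
def acoef1 (n : ℕ) (p : Fin n → ℝ) (lam c δ : ℝ) (F : Measure (Fin n → ℝ))
    (k m : Fin n → ℕ) : ℝ :=
  ∫ t in (0:ℝ)..δ, lam * Real.exp (-(c + lam) * t) *
    (F {α : Fin n → ℝ | 0 ≤ α ∧ ∀ i,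
        p i * δ * (((m i : ℤ) - (k i : ℤ) - 1 : ℤ) : ℝ) + t * p i < α i ∧
        α i ≤ p i * δ * (((m i : ℤ) - (k i : ℤ) : ℤ) : ℝ) + t * p i}).toReal

/-- The constant term `a₂(m)`. -/
def acoef2 (n : ℕ) (p a : Fin n → ℝ) (lam c δ : ℝ) (F : Measure (Fin n → ℝ))
    (υ : (Fin n → ℝ) → (Fin n → ℝ) → ℝ) (m : Fin n → ℕ) : ℝ :=
  (∫ t in (0:ℝ)..δ, lam * Real.exp (-(c + lam) * t) *
    ∫ α in {α : Fin n → ℝ | α ≤ gdel n p δ m + t • p},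
      (∑ i, a i * ((gdel n p δ m + t • p - α) i
        - proj n p δ (gdel n p δ m + t • p - α) i)) ∂F)
  - ∫ t in (0:ℝ)..δ, Real.exp (-(c + lam) * t) * Rpen n lam F υ (gdel n p δ m + t • p)

/-!
Fix `t ∈ [0, δ)` and a claim `α ≥ 0` below the surplus `x = g^δ(m) + t p`. The post-claim
index `ρ^δ(x - α)` equals `k` exactly when `α` lies in the half-open cell of `acoef1 k m`, and
it never exceeds `m`, since `x - α ≤ g^δ(m) + t p < g^δ(m + 1)`. Hence on `{α ≤ x}` the
function `w ∘ ρ^δ(x - ·)` is a.e. the finite step function `∑_{k ≤ m} w k · 1_{cell k}`, and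
integrating it against `F` and then in `t` produces `∑ₖ acoef1 k m · w k`. The rounding term
`a · (y - ⟨y⟩^δ)` is bounded on `y ≥ 0`, which makes every split of the integrals legitimate.
-/

def claimCell (n : ℕ) (p : Fin n → ℝ) (δ t : ℝ) (m k : Fin n → ℕ) : Set (Fin n → ℝ) :=
  {α | 0 ≤ α ∧ ∀ i,
      p i * δ * (((m i : ℤ) - (k i : ℤ) - 1 : ℤ) : ℝ) + t * p i < α i ∧
      α i ≤ p i * δ * (((m i : ℤ) - (k i : ℤ) : ℤ) : ℝ) + t * p i}

def roundingDividend (n : ℕ) (p a : Fin n → ℝ) (δ : ℝ) (x : Fin n → ℝ) : ℝ :=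
  ∑ i, a i * (x i - proj n p δ x i)

lemma nonneg_and_floor_div_eq_iff {x d : ℝ} (hd : 0 < d) {k : ℕ} :
    (0 ≤ x ∧ ⌊x / d⌋₊ = k) ↔ k * d ≤ x ∧ x < (k + 1) * d := by
  constructor
  · rintro ⟨hx, rfl⟩
    exact ⟨(le_div_iff₀ hd).mp (Nat.floor_le (div_nonneg hx hd.le)),
      (div_lt_iff₀ hd).mp (Nat.lt_floor_add_one _)⟩
  · rintro ⟨hlo, hhi⟩
    have hx : 0 ≤ x := le_trans (by positivity) hlo
    refine ⟨hx, (Nat.floor_eq_iff (div_nonneg hx hd.le)).mpr ⟨?_, ?_⟩⟩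
    · rwa [le_div_iff₀ hd]
    · rwa [div_lt_iff₀ hd]

section Grid

variable {n : ℕ} {p : Fin n → ℝ} {δ t : ℝ} {m k : Fin n → ℕ} {α : Fin n → ℝ}

lemma mem_claimCell_iff (hp : ∀ i, 0 < p i) (hδ : 0 < δ) (hα : 0 ≤ α) :
    α ∈ claimCell n p δ t m k ↔
      α ≤ gdel n p δ m + t • p ∧ rho n p δ (gdel n p δ m + t • p - α) = k := by
  rw [claimCell, Set.mem_ofPred_eq, and_iff_right hα]
  simp only [Pi.le_def, funext_iff, ← forall_and]
  refine forall_congr' fun i => ?_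
  have h := nonneg_and_floor_div_eq_iff (x := (gdel n p δ m + t • p - α) i)
    (mul_pos hδ (hp i)) (k := k i)
  simp only [rho, gdel, Pi.add_apply, Pi.sub_apply, Pi.smul_apply, smul_eq_mul,
    sub_nonneg] at h ⊢
  push_cast
  rw [h]
  constructor <;> rintro ⟨h1, h2⟩ <;> constructor <;> linarith

lemma rho_mem_piFinset (hp : ∀ i, 0 < p i) (hδ : 0 < δ) (ht : t < δ) (hα : 0 ≤ α) :
    rho n p δ (gdel n p δ m + t • p - α) ∈
      Fintype.piFinset fun i => Finset.range (m i + 1) := by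
  simp only [Fintype.mem_piFinset, Finset.mem_range]
  intro i
  rw [rho, Nat.floor_lt' (Nat.succ_ne_zero _), div_lt_iff₀ (mul_pos hδ (hp i))]
  simp only [gdel, Pi.add_apply, Pi.sub_apply, Pi.smul_apply, smul_eq_mul]
  push_cast
  have hαi : 0 ≤ α i := hα i
  linarith [mul_lt_mul_of_pos_right ht (hp i)]

lemma indicator_comp_rho_eq_sum (hp : ∀ i, 0 < p i) (hδ : 0 < δ) (ht : t < δ) (hα : 0 ≤ α)
    (w : (Fin n → ℕ) → ℝ) :
    {α | α ≤ gdel n p δ m + t • p}.indicator (fun α => w (rho n p δ (gdel n p δ m + t • p - α))) α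
      = ∑ k ∈ Fintype.piFinset (fun i => Finset.range (m i + 1)),
          (claimCell n p δ t m k).indicator (fun _ => w k) α := by
  classical
  simp only [Set.indicator_apply, mem_claimCell_iff hp hδ hα]
  by_cases hS : α ≤ gdel n p δ m + t • p
  · simp [hS, Finset.sum_ite_eq, rho_mem_piFinset hp hδ ht hα]
  · simp [hS]

lemma measurableSet_claimCell_prod (m k : Fin n → ℕ) :
    MeasurableSet {q : ℝ × (Fin n → ℝ) | q.2 ∈ claimCell n p δ q.1 m k} := by
  refine measurableSet_setOfPred.mpr ?_
  simp only [claimCell, Set.mem_ofPred_eq]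
  fun_prop

lemma measurableSet_claimCell : MeasurableSet (claimCell n p δ t m k) :=
  measurable_prodMk_left (measurableSet_claimCell_prod m k)

lemma measurable_roundingDividend (a : Fin n → ℝ) : Measurable (roundingDividend n p a δ) := by
  unfold roundingDividend proj gdel rho
  fun_prop

lemma abs_roundingDividend_le (hp : ∀ i, 0 < p i) (hδ : 0 < δ) (a : Fin n → ℝ) {x : Fin n → ℝ}
    (hx : 0 ≤ x) : |roundingDividend n p a δ x| ≤ ∑ i, |a i| * (δ * p i) := by
  refine (Finset.abs_sum_le_sum_abs _ _).trans (Finset.sum_le_sum fun i _ => ?_)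
  obtain ⟨hlo, hhi⟩ := (nonneg_and_floor_div_eq_iff (mul_pos hδ (hp i))).mp ⟨hx i, rfl⟩
  rw [abs_mul]
  refine mul_le_mul_of_nonneg_left ?_ (abs_nonneg _)
  simp only [proj, gdel, rho]
  rw [abs_le]
  constructor <;> nlinarith

end Grid

lemma intervalIntegrable_of_abs_le {g : ℝ → ℝ} (hg : AEStronglyMeasurable g) {C : ℝ}
    (hC : ∀ t, |g t| ≤ C) (a b : ℝ) : IntervalIntegrable g volume a b :=
  intervalIntegrable_iff.mpr
    (IntegrableOn.of_bound measure_Ioc_lt_top hg.restrict C (ae_of_all _ hC))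

section Integrals

variable {n : ℕ} {p : Fin n → ℝ} {δ t : ℝ} {m : Fin n → ℕ} {F : Measure (Fin n → ℝ)}

lemma indicator_comp_rho_ae_eq_sum (hp : ∀ i, 0 < p i) (hδ : 0 < δ) (ht : t < δ)
    (hF : ∀ᵐ α ∂F, 0 ≤ α) (w : (Fin n → ℕ) → ℝ) :
    {α | α ≤ gdel n p δ m + t • p}.indicator (fun α => w (rho n p δ (gdel n p δ m + t • p - α)))
      =ᵐ[F] fun α => ∑ k ∈ Fintype.piFinset (fun i => Finset.range (m i + 1)),
          (claimCell n p δ t m k).indicator (fun _ => w k) α :=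
  hF.mono fun _ hα => indicator_comp_rho_eq_sum hp hδ ht hα w

lemma integrable_indicator_claimCell (k : Fin n → ℕ) [IsFiniteMeasure F] (y : ℝ) :
    Integrable ((claimCell n p δ t m k).indicator fun _ => y) F :=
  (integrable_const y).indicator measurableSet_claimCell

lemma integrableOn_comp_rho [IsFiniteMeasure F] (hp : ∀ i, 0 < p i) (hδ : 0 < δ) (ht : t < δ)
    (hF : ∀ᵐ α ∂F, 0 ≤ α) (w : (Fin n → ℕ) → ℝ) :
    IntegrableOn (fun α => w (rho n p δ (gdel n p δ m + t • p - α)))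
      {α | α ≤ gdel n p δ m + t • p} F := by
  have hS : MeasurableSet {α | α ≤ gdel n p δ m + t • p} := measurableSet_Iic
  refine (integrable_indicator_iff hS).mp ?_
  exact (integrable_finsetSum _ fun k _ => integrable_indicator_claimCell k (w k)).congr
    (indicator_comp_rho_ae_eq_sum hp hδ ht hF w).symm

lemma setIntegral_comp_rho [IsFiniteMeasure F] (hp : ∀ i, 0 < p i) (hδ : 0 < δ) (ht : t < δ)
    (hF : ∀ᵐ α ∂F, 0 ≤ α) (w : (Fin n → ℕ) → ℝ) :
    ∫ α in {α | α ≤ gdel n p δ m + t • p}, w (rho n p δ (gdel n p δ m + t • p - α)) ∂F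
      = ∑ k ∈ Fintype.piFinset (fun i => Finset.range (m i + 1)),
          (F (claimCell n p δ t m k)).toReal * w k := by
  have hS : MeasurableSet {α | α ≤ gdel n p δ m + t • p} := measurableSet_Iic
  rw [← integral_indicator hS, integral_congr_ae (indicator_comp_rho_ae_eq_sum hp hδ ht hF w),
    integral_finsetSum _ fun k _ => integrable_indicator_claimCell k (w k)]
  refine Finset.sum_congr rfl fun k _ => ?_
  rw [integral_indicator_const _ measurableSet_claimCell, smul_eq_mul, measureReal_def]

lemma integrableOn_roundingDividend [IsFiniteMeasure F] (hp : ∀ i, 0 < p i) (hδ : 0 < δ)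
    (a : Fin n → ℝ) :
    IntegrableOn (fun α => roundingDividend n p a δ (gdel n p δ m + t • p - α))
      {α | α ≤ gdel n p δ m + t • p} F := by
  have hS : MeasurableSet {α | α ≤ gdel n p δ m + t • p} := measurableSet_Iic
  refine IntegrableOn.of_bound (measure_lt_top _ _)
    ((measurable_roundingDividend a).comp (by fun_prop)).aestronglyMeasurable
    (∑ i, |a i| * (δ * p i)) (ae_restrict_of_forall_mem hS fun α hα => ?_)
  exact abs_roundingDividend_le hp hδ a (sub_nonneg.mpr hα)

lemma intervalIntegrable_measure_claimCell [IsFiniteMeasure F] (k : Fin n → ℕ) :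
    IntervalIntegrable (fun t => (F (claimCell n p δ t m k)).toReal) volume 0 δ := by
  have hmeas : Measurable fun t => (F (claimCell n p δ t m k)).toReal :=
    (measurable_measure_prodMk_left (measurableSet_claimCell_prod m k)).ennreal_toReal
  refine intervalIntegrable_of_abs_le (C := F.real Set.univ) hmeas.aestronglyMeasurable
    (fun t => ?_) 0 δ
  rw [abs_of_nonneg ENNReal.toReal_nonneg]
  exact measureReal_mono (Set.subset_univ _)

lemma intervalIntegrable_setIntegral_roundingDividend [IsFiniteMeasure F] (hp : ∀ i, 0 < p i)
    (hδ : 0 < δ) (a : Fin n → ℝ) :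
    IntervalIntegrable (fun t => ∫ α in {α | α ≤ gdel n p δ m + t • p},
      roundingDividend n p a δ (gdel n p δ m + t • p - α) ∂F) volume 0 δ := by
  have hset : MeasurableSet {q : ℝ × (Fin n → ℝ) | q.2 ≤ gdel n p δ m + q.1 • p} :=
    measurableSet_le (by fun_prop) (by fun_prop)
  have hmeas := (((measurable_roundingDividend (p := p) (δ := δ) a).comp
    (f := fun q : ℝ × (Fin n → ℝ) => gdel n p δ m + q.1 • p - q.2) (by fun_prop)).indicator
      hset).stronglyMeasurable.integral_prod_right' (ν := F)
  refine intervalIntegrable_of_abs_le (C := (∑ i, |a i| * (δ * p i)) * F.real Set.univ)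
    ?_ (fun t => ?_) 0 δ
  · convert hmeas.aestronglyMeasurable using 2 with t
    exact (integral_indicator (measurableSet_Iic : MeasurableSet (Set.Iic _))).symm
  · refine (norm_setIntegral_le_of_norm_le_const (measure_lt_top _ _)
      (f := fun α => roundingDividend n p a δ (gdel n p δ m + t • p - α)) fun α hα =>
      abs_roundingDividend_le hp hδ a (sub_nonneg.mpr hα)).trans ?_
    exact mul_le_mul_of_nonneg_left (measureReal_mono (Set.subset_univ _))
      ((abs_nonneg _).trans (abs_roundingDividend_le hp hδ a le_rfl))

lemma setIntegral_comp_rho_add_roundingDividend [IsFiniteMeasure F] (hp : ∀ i, 0 < p i)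
    (hδ : 0 < δ) (ht : t < δ) (hF : ∀ᵐ α ∂F, 0 ≤ α) (a : Fin n → ℝ) (w : (Fin n → ℕ) → ℝ) :
    ∫ α in {α | α ≤ gdel n p δ m + t • p}, (w (rho n p δ (gdel n p δ m + t • p - α)) +
        roundingDividend n p a δ (gdel n p δ m + t • p - α)) ∂F
      = ∑ k ∈ Fintype.piFinset (fun i => Finset.range (m i + 1)),
          (F (claimCell n p δ t m k)).toReal * w k +
        ∫ α in {α | α ≤ gdel n p δ m + t • p},
          roundingDividend n p a δ (gdel n p δ m + t • p - α) ∂F := by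
  rw [integral_add (integrableOn_comp_rho hp hδ ht hF w) (integrableOn_roundingDividend hp hδ a),
    setIntegral_comp_rho hp hδ ht hF w]

lemma Idel_eq_sum_acoef1_add [IsFiniteMeasure F] (hp : ∀ i, 0 < p i) (hδ : 0 < δ)
    (hF : ∀ᵐ α ∂F, 0 ≤ α) (a : Fin n → ℝ) (lam c : ℝ) (w : (Fin n → ℕ) → ℝ) :
    Idel n p a lam c δ F w m =
      ∑ k ∈ Fintype.piFinset (fun i => Finset.range (m i + 1)), acoef1 n p lam c δ F k m * w k +
      ∫ t in (0:ℝ)..δ, lam * Real.exp (-(c + lam) * t) *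
        ∫ α in {α | α ≤ gdel n p δ m + t • p},
          roundingDividend n p a δ (gdel n p δ m + t • p - α) ∂F := by
  set e : ℝ → ℝ := fun t => lam * Real.exp (-(c + lam) * t)
  have he : ContinuousOn e (Set.uIcc 0 δ) := by fun_prop
  have hsplit : ∀ᵐ t, t ∈ Set.uIoc 0 δ →
      e t * ∫ α in {α | α ≤ gdel n p δ m + t • p}, (w (rho n p δ (gdel n p δ m + t • p - α)) +
        roundingDividend n p a δ (gdel n p δ m + t • p - α)) ∂F
      = ∑ k ∈ Fintype.piFinset (fun i => Finset.range (m i + 1)),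
          e t * (F (claimCell n p δ t m k)).toReal * w k +
        e t * ∫ α in {α | α ≤ gdel n p δ m + t • p},
          roundingDividend n p a δ (gdel n p δ m + t • p - α) ∂F := by
    -- at `t = δ` a claim with some `αᵢ = 0` lands in index `mᵢ + 1`, outside the sum
    filter_upwards [volume.ae_ne δ] with t htδ ht
    rw [Set.uIoc_of_le hδ.le] at ht
    rw [setIntegral_comp_rho_add_roundingDividend hp hδ (lt_of_le_of_ne ht.2 htδ) hF,
      mul_add, Finset.mul_sum]
    simp only [mul_assoc]
  have hcell : ∀ k ∈ Fintype.piFinset (fun i => Finset.range (m i + 1)), IntervalIntegrable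
      (fun t => e t * (F (claimCell n p δ t m k)).toReal * w k) volume 0 δ :=
    fun k _ => ((intervalIntegrable_measure_claimCell k).continuousOn_mul he).mul_const (w k)
  calc Idel n p a lam c δ F w m = _ := intervalIntegral.integral_congr_ae hsplit
    _ = _ := by
      have hsum := IntervalIntegrable.sum _ hcell
      rw [Finset.sum_fn] at hsum
      rw [intervalIntegral.integral_add hsum
        ((intervalIntegrable_setIntegral_roundingDividend hp hδ a).continuousOn_mul he),
        intervalIntegral.integral_finsetSum hcell]
      simp only [intervalIntegral.integral_mul_const]
      rfl

end Integrals

theorem stmt1_general (n : ℕ) (p a : Fin n → ℝ)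
    (hp : ∀ i, 0 < p i)
    (lam c δ : ℝ) (hlam : 0 < lam) (hδ : 0 < δ)
    (F : Measure (Fin n → ℝ)) [IsProbabilityMeasure F]
    (hFpos : F {α | ¬ 0 ≤ α} = 0)
    (υ : (Fin n → ℝ) → (Fin n → ℝ) → ℝ) :
    (∀ k m : Fin n → ℕ, 0 ≤ acoef1 n p lam c δ F k m) ∧
    (∀ (w : (Fin n → ℕ) → ℝ) (m : Fin n → ℕ),
      T0 n p a lam c δ F υ w m =
        Real.exp (-(c + lam) * δ) * w (m + 1) +
        (∑ k ∈ Fintype.piFinset (fun i => Finset.range (m i + 1)),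
          acoef1 n p lam c δ F k m * w k) +
        acoef2 n p a lam c δ F υ m) := by
  refine ⟨fun k m => intervalIntegral.integral_nonneg hδ.le fun t _ => by positivity,
    fun w m => ?_⟩
  rw [T0, acoef2, Idel_eq_sum_acoef1_add hp hδ (ae_iff.mpr hFpos)]
  unfold roundingDividend
  ring

/-- `T₀` is an affine function, with nonnegative coefficients, of the values
of `w` at the grid indices `0 ≤ k ≤ m+1`. -/
theorem stmt1 (n : ℕ) (hn : 1 ≤ n) (p a : Fin n → ℝ)
    (hp : ∀ i, 0 < p i) (ha : ∀ i, 0 < a i)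
    (lam c δ : ℝ) (hlam : 0 < lam) (hc : 0 < c) (hδ : 0 < δ)
    (F : Measure (Fin n → ℝ)) [IsProbabilityMeasure F]
    (hFpos : F {α | ¬ 0 ≤ α} = 0) (hF0 : F {0} = 0)
    (hFmom : Integrable (fun α => ‖α‖) F)
    (υ : (Fin n → ℝ) → (Fin n → ℝ) → ℝ) (hυmeas : Measurable (Function.uncurry υ))
    (hυint : Integrable (fun α => |υ 0 α|) F)
    (hRcont : ContinuousOn (Rpen n lam F υ) {x | 0 ≤ x}) :
    (∀ k m : Fin n → ℕ, 0 ≤ acoef1 n p lam c δ F k m) ∧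
    (∀ (w : (Fin n → ℕ) → ℝ) (m : Fin n → ℕ),
      T0 n p a lam c δ F υ w m =
        Real.exp (-(c + lam) * δ) * w (m + 1) +
        (∑ k ∈ Fintype.piFinset (fun i => Finset.range (m i + 1)),
          acoef1 n p lam c δ F k m * w k) +
        acoef2 n p a lam c δ F υ m) :=
  stmt1_general n p a hp lam c δ hlam hδ F hFpos υ

end
end

section
/- Define the value-iteration sequence v_1(m) = f(g^δ(m)) and v_{l+1} = T(v_l) for l ≥ 1. Then: (i) v_{l+1} ≥ v_l pointwise on ℕ_0^n for every l ≥ 1; and (ii) if w : ℕ_0^n → ℝ is any supersolution of the discrete HJB equation (i.e. T(w) ≤ w pointwise), then v_l ≤ w pointwise for every l ≥ 1. -/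
/-!
The Bellman operator `T` is monotone: `Tᵢ` and `Tₛ` obviously are, and `T₀` is because `I^δ`
integrates `w` against a nonnegative kernel. Both claims then follow by induction from
`v₁ = Tₛ(v₁) ≤ T(v₁)` and `v₁ ≤ T(w) ≤ w`.

The analytic content is that the Bochner integrals in `I^δ` are not junk, so that they are
monotone in `w`. Since `F` lives on `ℝ₊ⁿ`, the surplus after a claim stays in the box
`[0, g^δ(m) + δp]`, on which `ρ^δ` takes finitely many values and `x - ⟨x⟩^δ ∈ [0, δp)`; hence
the integrands are bounded and measurable.
-/

open MeasureTheory Filter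

noncomputable section

variable {n : ℕ}

section Grid

variable {p : Fin n → ℝ} {δ : ℝ}

theorem rho_le_rho {x y : Fin n → ℝ} (hx : 0 ≤ x) (hxy : x ≤ y) :
    rho n p δ x ≤ rho n p δ y := by
  intro i
  rcases le_or_gt 0 (δ * p i) with hq | hq
  · exact Nat.floor_mono (div_le_div_of_nonneg_right (hxy i) hq)
  · simp only [rho, Nat.floor_of_nonpos (div_nonpos_of_nonneg_of_nonpos (hx i) hq.le),
      Nat.zero_le]

theorem sub_proj_mem_Ico {x : Fin n → ℝ} {i : Fin n} (hq : 0 < δ * p i) (hx : 0 ≤ x i) :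
    x i - proj n p δ x i ∈ Set.Ico 0 (δ * p i) := by
  have hproj : proj n p δ x i = ⌊x i / (δ * p i)⌋₊ * (δ * p i) := by
    simp only [proj, gdel, rho]; ring
  have hfloor_le := (le_div_iff₀ hq).1 (Nat.floor_le (div_nonneg hx hq.le))
  have hlt_floor := (div_lt_iff₀ hq).1 (Nat.lt_floor_add_one (x i / (δ * p i)))
  rw [hproj]
  constructor <;> linarith

theorem measurable_rho : Measurable (rho n p δ) :=
  measurable_pi_lambda _ fun i => Nat.measurable_floor.comp ((measurable_pi_apply i).div_const _)

end Grid

def idelIntegrand (p a : Fin n → ℝ) (δ : ℝ) (w : (Fin n → ℕ) → ℝ) (x : Fin n → ℝ) : ℝ :=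
  w (rho n p δ x) + ∑ i, a i * (x i - proj n p δ x i)

section Integrand

variable {p a : Fin n → ℝ} {δ : ℝ} {w : (Fin n → ℕ) → ℝ}

theorem measurable_idelIntegrand : Measurable (idelIntegrand p a δ w) := by
  have hproj : Measurable (proj n p δ) := (measurable_of_countable _).comp measurable_rho
  have hw : Measurable fun x => w (rho n p δ x) := (measurable_of_countable w).comp measurable_rho
  exact hw.add (Finset.measurable_sum _ fun i _ =>
    ((measurable_pi_apply i).sub ((measurable_pi_apply i).comp hproj)).const_mul (a i))

theorem exists_abs_idelIntegrand_le (hp : ∀ i, 0 < p i) (hδ : 0 < δ) (B : Fin n → ℝ) :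
    ∃ C, ∀ x ∈ Set.Icc 0 B, |idelIntegrand p a δ w x| ≤ C := by
  refine ⟨∑ k ∈ Finset.Iic (rho n p δ B), |w k| + ∑ i, |a i| * (δ * p i), fun x hx => ?_⟩
  refine (abs_add_le _ _).trans (add_le_add ?_ ?_)
  · exact Finset.single_le_sum (f := fun k => |w k|) (fun k _ => abs_nonneg _)
      (Finset.mem_Iic.2 (rho_le_rho hx.1 hx.2))
  · refine (Finset.abs_sum_le_sum_abs _ _).trans (Finset.sum_le_sum fun i _ => ?_)
    obtain ⟨hfrac_nonneg, hfrac_lt⟩ := sub_proj_mem_Ico (mul_pos hδ (hp i)) (hx.1 i)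
    rw [abs_mul, abs_of_nonneg hfrac_nonneg]
    exact mul_le_mul_of_nonneg_left hfrac_lt.le (abs_nonneg _)

end Integrand

section SetIntegralIic

variable {F : Measure (Fin n → ℝ)} {φ : (Fin n → ℝ) → ℝ}

theorem ae_restrict_Iic_sub_mem_Icc (hF : ∀ᵐ α ∂F, 0 ≤ α) (y : Fin n → ℝ) :
    ∀ᵐ α ∂F.restrict (Set.Iic y), y - α ∈ Set.Icc 0 y := by
  filter_upwards [ae_restrict_of_ae hF, ae_restrict_mem measurableSet_Iic] with α hα hαy
  exact ⟨sub_nonneg.2 hαy, sub_le_self y hα⟩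

theorem integrableOn_Iic_comp_sub [IsFiniteMeasure F] (hφ : Measurable φ)
    (hF : ∀ᵐ α ∂F, 0 ≤ α) {y : Fin n → ℝ} {C : ℝ} (hC : ∀ x ∈ Set.Icc 0 y, |φ x| ≤ C) :
    IntegrableOn (fun α => φ (y - α)) (Set.Iic y) F :=
  Measure.integrableOn_of_bounded (measure_ne_top F _)
    (hφ.comp (measurable_const.sub measurable_id)).aestronglyMeasurable
    ((ae_restrict_Iic_sub_mem_Icc hF y).mono fun _ hα => hC _ hα)

theorem norm_setIntegral_Iic_comp_sub_le [IsProbabilityMeasure F] (hF : ∀ᵐ α ∂F, 0 ≤ α)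
    {y : Fin n → ℝ} (hy : 0 ≤ y) {C : ℝ} (hC : ∀ x ∈ Set.Icc 0 y, |φ x| ≤ C) :
    ‖∫ α in Set.Iic y, φ (y - α) ∂F‖ ≤ C := by
  have hC0 : 0 ≤ C := (abs_nonneg _).trans (hC 0 ⟨le_rfl, hy⟩)
  refine (norm_setIntegral_le_of_norm_le_const_ae (measure_lt_top F _)
    ((ae_restrict_Iic_sub_mem_Icc hF y).mono fun _ hα => hC _ hα)).trans ?_
  exact mul_le_of_le_one_right hC0 measureReal_le_one

theorem stronglyMeasurable_setIntegral_Iic_comp_sub [SFinite F] (hφ : Measurable φ)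
    {y : ℝ → Fin n → ℝ} (hy : Measurable y) :
    StronglyMeasurable fun t => ∫ α in Set.Iic (y t), φ (y t - α) ∂F := by
  have hS : MeasurableSet {q : ℝ × (Fin n → ℝ) | q.2 ≤ y q.1} :=
    measurableSet_le measurable_snd (hy.comp measurable_fst)
  have hΨ := ((hφ.comp ((hy.comp measurable_fst).sub measurable_snd)).indicator
    hS).stronglyMeasurable.integral_prod_right' (ν := F)
  convert hΨ using 2 with t
  rw [← integral_indicator measurableSet_Iic]
  rfl

end SetIntegralIic

section Idel

variable {p a : Fin n → ℝ} {lam c δ : ℝ} {F : Measure (Fin n → ℝ)}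

theorem Idel_eq_integral_idelIntegrand (w : (Fin n → ℕ) → ℝ) (m : Fin n → ℕ) :
    Idel n p a lam c δ F w m = ∫ t in (0:ℝ)..δ, lam * Real.exp (-(c + lam) * t) *
      ∫ α in Set.Iic (gdel n p δ m + t • p),
        idelIntegrand p a δ w (gdel n p δ m + t • p - α) ∂F :=
  rfl

variable [IsProbabilityMeasure F]

theorem integrableOn_Iic_idelIntegrand (hp : ∀ i, 0 < p i) (hδ : 0 < δ)
    (hF : ∀ᵐ α ∂F, 0 ≤ α) (w : (Fin n → ℕ) → ℝ) (y : Fin n → ℝ) :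
    IntegrableOn (fun α => idelIntegrand p a δ w (y - α)) (Set.Iic y) F :=
  let ⟨_, hC⟩ := exists_abs_idelIntegrand_le (a := a) (w := w) hp hδ y
  integrableOn_Iic_comp_sub measurable_idelIntegrand hF hC

theorem intervalIntegrable_Idel_integrand (hp : ∀ i, 0 < p i) (hδ : 0 < δ)
    (hF : ∀ᵐ α ∂F, 0 ≤ α) (w : (Fin n → ℕ) → ℝ) (m : Fin n → ℕ) :
    IntervalIntegrable (fun t => lam * Real.exp (-(c + lam) * t) *
      ∫ α in Set.Iic (gdel n p δ m + t • p),
        idelIntegrand p a δ w (gdel n p δ m + t • p - α) ∂F) volume 0 δ := by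
  set B := gdel n p δ m + δ • p
  obtain ⟨C, hC⟩ := exists_abs_idelIntegrand_le (a := a) (w := w) hp hδ B
  have hp0 : 0 ≤ p := fun i => (hp i).le
  have hgdel : 0 ≤ gdel n p δ m := fun i =>
    mul_nonneg (mul_nonneg (hp i).le hδ.le) (Nat.cast_nonneg _)
  have hbound : ∀ t ∈ Set.Icc 0 δ, ‖∫ α in Set.Iic (gdel n p δ m + t • p),
      idelIntegrand p a δ w (gdel n p δ m + t • p - α) ∂F‖ ≤ C := fun t ht =>
    norm_setIntegral_Iic_comp_sub_le hF (add_nonneg hgdel (smul_nonneg ht.1 hp0))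
      fun x hx => hC x
        ⟨hx.1, hx.2.trans (add_le_add_right (smul_le_smul_of_nonneg_right ht.2 hp0) _)⟩
  have hJ : IntegrableOn (fun t => ∫ α in Set.Iic (gdel n p δ m + t • p),
      idelIntegrand p a δ w (gdel n p δ m + t • p - α) ∂F) (Set.Icc 0 δ) volume :=
    Measure.integrableOn_of_bounded measure_Icc_lt_top.ne
      (stronglyMeasurable_setIntegral_Iic_comp_sub measurable_idelIntegrand
        (measurable_const.add (measurable_id.smul_const p))).aestronglyMeasurable
      ((ae_restrict_mem measurableSet_Icc).mono hbound)
  refine IntegrableOn.intervalIntegrable ?_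
  rw [Set.uIcc_of_le hδ.le]
  exact hJ.continuousOn_mul (by fun_prop) isCompact_Icc

theorem Idel_le_Idel (hlam : 0 ≤ lam) (hp : ∀ i, 0 < p i) (hδ : 0 < δ) (hF : ∀ᵐ α ∂F, 0 ≤ α)
    {w₁ w₂ : (Fin n → ℕ) → ℝ} (hw : w₁ ≤ w₂) (m : Fin n → ℕ) :
    Idel n p a lam c δ F w₁ m ≤ Idel n p a lam c δ F w₂ m := by
  rw [Idel_eq_integral_idelIntegrand, Idel_eq_integral_idelIntegrand]
  refine intervalIntegral.integral_mono_on hδ.le (intervalIntegrable_Idel_integrand hp hδ hF w₁ m)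
    (intervalIntegrable_Idel_integrand hp hδ hF w₂ m) fun t _ => ?_
  exact mul_le_mul_of_nonneg_left (setIntegral_mono (integrableOn_Iic_idelIntegrand hp hδ hF w₁ _)
    (integrableOn_Iic_idelIntegrand hp hδ hF w₂ _) fun α => add_le_add_left (hw _) _)
    (by positivity)

theorem T0_le_T0 (hlam : 0 ≤ lam) (hp : ∀ i, 0 < p i) (hδ : 0 < δ) (hF : ∀ᵐ α ∂F, 0 ≤ α)
    (υ : (Fin n → ℝ) → (Fin n → ℝ) → ℝ) {w₁ w₂ : (Fin n → ℕ) → ℝ} (hw : w₁ ≤ w₂)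
    (m : Fin n → ℕ) :
    T0 n p a lam c δ F υ w₁ m ≤ T0 n p a lam c δ F υ w₂ m := by
  unfold T0
  gcongr
  · exact hw _
  · exact Idel_le_Idel hlam hp hδ hF hw m

end Idel

section Bellman

variable {p a : Fin n → ℝ} {lam c δ : ℝ} {F : Measure (Fin n → ℝ)}
  {υ : (Fin n → ℝ) → (Fin n → ℝ) → ℝ} {f : (Fin n → ℝ) → ℝ}

theorem le_Tbell_of_mem {w : (Fin n → ℕ) → ℝ} {m : Fin n → ℕ} {x : ℝ}
    (hx : x ∈ ({T0 n p a lam c δ F υ w m, Ts n p δ f w m} ∪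
      (fun i => Ti n p a δ i w m) '' {i | 0 < m i})) :
    x ≤ Tbell n p a lam c δ F υ f w m :=
  le_csSup (((Set.finite_singleton _).insert _).union ((Set.toFinite _).image _)).bddAbove hx

theorem Ts_le_Tbell (w : (Fin n → ℕ) → ℝ) (m : Fin n → ℕ) :
    Ts n p δ f w m ≤ Tbell n p a lam c δ F υ f w m :=
  le_Tbell_of_mem (Or.inl (Or.inr rfl))

theorem Tbell_le_Tbell {w₁ w₂ : (Fin n → ℕ) → ℝ} {m : Fin n → ℕ}
    (hT0 : T0 n p a lam c δ F υ w₁ m ≤ T0 n p a lam c δ F υ w₂ m) (hw : w₁ ≤ w₂) :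
    Tbell n p a lam c δ F υ f w₁ m ≤ Tbell n p a lam c δ F υ f w₂ m := by
  refine csSup_le ⟨_, Or.inl (Or.inr rfl)⟩ ?_
  rintro x ((rfl | rfl) | ⟨i, hi, rfl⟩)
  · exact hT0.trans (le_Tbell_of_mem (Or.inl (Or.inl rfl)))
  · exact Ts_le_Tbell w₂ m
  · exact (add_le_add_left (hw _) _).trans (le_Tbell_of_mem (Or.inr ⟨i, hi, rfl⟩))

theorem monotone_Tbell [IsProbabilityMeasure F] (hlam : 0 ≤ lam) (hp : ∀ i, 0 < p i)
    (hδ : 0 < δ) (hF : ∀ᵐ α ∂F, 0 ≤ α) :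
    Monotone (Tbell n p a lam c δ F υ f) := fun _ _ hw m =>
  Tbell_le_Tbell (T0_le_T0 hlam hp hδ hF υ hw m) hw

end Bellman

section ValueIteration

variable {α : Type*} [Preorder α] {T : α → α} {v : ℕ → α}

theorem le_succ_of_monotone_of_eq_apply (hT : Monotone T)
    (hv : ∀ l, 1 ≤ l → v (l + 1) = T (v l)) (h₁ : v 1 ≤ v 2) :
    ∀ l, 1 ≤ l → v l ≤ v (l + 1) := by
  intro l hl
  induction l, hl using Nat.le_induction with
  | base => exact h₁
  | succ l hl ih => rw [hv l hl, hv (l + 1) (by omega)]; exact hT ih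

theorem le_of_monotone_of_eq_apply (hT : Monotone T)
    (hv : ∀ l, 1 ≤ l → v (l + 1) = T (v l)) {w : α} (h₁ : v 1 ≤ w) (hw : T w ≤ w) :
    ∀ l, 1 ≤ l → v l ≤ w := by
  intro l hl
  induction l, hl using Nat.le_induction with
  | base => exact h₁
  | succ l hl ih => rw [hv l hl]; exact (hT ih).trans hw

end ValueIteration

theorem stmt2_general (n : ℕ) (p a : Fin n → ℝ)
    (hp : ∀ i, 0 < p i)
    (lam c δ : ℝ) (hlam : 0 < lam) (hδ : 0 < δ)
    (F : Measure (Fin n → ℝ)) [IsProbabilityMeasure F]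
    (hFpos : F {α | ¬ 0 ≤ α} = 0)
    (υ : (Fin n → ℝ) → (Fin n → ℝ) → ℝ)
    (f : (Fin n → ℝ) → ℝ)
    (v : ℕ → (Fin n → ℕ) → ℝ)
    (hv1 : ∀ m, v 1 m = f (gdel n p δ m))
    (hvrec : ∀ l, 1 ≤ l → v (l + 1) = Tbell n p a lam c δ F υ f (v l)) :
    (∀ l, 1 ≤ l → ∀ m, v l m ≤ v (l + 1) m) ∧
    (∀ w : (Fin n → ℕ) → ℝ, (∀ m, Tbell n p a lam c δ F υ f w m ≤ w m) →
      ∀ l, 1 ≤ l → ∀ m, v l m ≤ w m) := by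
  have hT := monotone_Tbell (a := a) (c := c) (υ := υ) (f := f) hlam.le hp hδ (ae_iff.2 hFpos)
  have hv1_le : ∀ w, v 1 ≤ Tbell n p a lam c δ F υ f w := fun w m =>
    (hv1 m).trans_le (Ts_le_Tbell w m)
  refine ⟨le_succ_of_monotone_of_eq_apply hT hvrec ?_, fun w hw =>
    le_of_monotone_of_eq_apply hT hvrec ((hv1_le w).trans hw) hw⟩
  rw [hvrec 1 le_rfl]
  exact hv1_le (v 1)

/-- the value-iteration sequence `v₁ = f ∘ g^δ`, `v_{l+1} = T(v_l)` is
nondecreasing, and bounded above by every discrete supersolution. -/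
theorem stmt2 (n : ℕ) (hn : 1 ≤ n) (p a : Fin n → ℝ)
    (hp : ∀ i, 0 < p i) (ha : ∀ i, 0 < a i)
    (lam c δ : ℝ) (hlam : 0 < lam) (hc : 0 < c) (hδ : 0 < δ)
    (F : Measure (Fin n → ℝ)) [IsProbabilityMeasure F]
    (hFpos : F {α | ¬ 0 ≤ α} = 0) (hF0 : F {0} = 0)
    (hFmom : Integrable (fun α => ‖α‖) F)
    (υ : (Fin n → ℝ) → (Fin n → ℝ) → ℝ) (hυmeas : Measurable (Function.uncurry υ))
    (hυint : Integrable (fun α => |υ 0 α|) F)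
    (hRcont : ContinuousOn (Rpen n lam F υ) {x | 0 ≤ x})
    (f : (Fin n → ℝ) → ℝ)
    (v : ℕ → (Fin n → ℕ) → ℝ)
    (hv1 : ∀ m, v 1 m = f (gdel n p δ m))
    (hvrec : ∀ l, 1 ≤ l → v (l + 1) = Tbell n p a lam c δ F υ f (v l)) :
    (∀ l, 1 ≤ l → ∀ m, v l m ≤ v (l + 1) m) ∧
    (∀ w : (Fin n → ℕ) → ℝ, (∀ m, Tbell n p a lam c δ F υ f w m ≤ w m) →
      ∀ l, 1 ≤ l → ∀ m, v l m ≤ w m) :=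
  stmt2_general n p a hp lam c δ hlam hδ F hFpos υ f v hv1 hvrec

end
end

section
/- In the two-company setting, suppose k_0 > (p_1 + p_2)/c and V_2(z) < z + k_0, V_1(z) < z + k_0 and V_M(z) < z + c_M + k_0 for all z ≥ 0. Then for every k ≥ k_0 the continuously differentiable function W_k(x_1,x_2) := x_1 + x_2 + k satisfies, at every point x ∈ ℝ_+²: ∂_{x_1}W_k(x) = ∂_{x_2}W_k(x) = 1 = a_i, f(x) − W_k(x) < 0, and L(W_k)(x) < 0; hence max{max_i(a_i − ∂_{x_i}W_k(x)), L(W_k)(x), f(x) − W_k(x)} = 0 for every x ∈ ℝ_+², i.e. each W_k solves the HJB equation classically. In particular the HJB equation admits infinitely many solutions. -/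
/-! Since `W_k` is affine with unit gradient, the gradient constraint is active and it remains
to see `f < W_k` and `L(W_k) < 0` on `ℝ₊²`. Claims are a.s. positive, so a claim `α` that the
reserves survive gives `W_k(x - α) ≤ W_k(x)`, and a ruinous claim costs `V_i < W_k(x)`; with
`F_i(x_i) + (1 - F_i(x_i)) = 1` this gives `I(W_k)(x) - R(x) ≤ λ W_k(x)`, hence
`L(W_k)(x) ≤ p₁ + p₂ - c W_k(x) ≤ p₁ + p₂ - c k < 0`. -/

open MeasureTheory Filter

noncomputable section

/-- The integral operator `I(W)(x) = λ ∫_{x-α ∈ ℝ₊ⁿ} W(x−α) dF(α)`. -/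
def Iop (n : ℕ) (lam : ℝ) (F : Measure (Fin n → ℝ))
    (W : (Fin n → ℝ) → ℝ) (x : Fin n → ℝ) : ℝ :=
  lam * ∫ α in {α : Fin n → ℝ | 0 ≤ x - α}, W (x - α) ∂F

/-- The discounted generator `L(W)(x) = p·∇W(x) − (c+λ)W(x) + I(W)(x) − R(x)`. -/
def Lop (n : ℕ) (p : Fin n → ℝ) (lam c : ℝ) (F : Measure (Fin n → ℝ))
    (υ : (Fin n → ℝ) → (Fin n → ℝ) → ℝ) (W : (Fin n → ℝ) → ℝ) (x : Fin n → ℝ) : ℝ :=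
  (∑ i, p i * fderiv ℝ W x (Pi.single i 1)) - (c + lam) * W x +
    Iop n lam F W x - Rpen n lam F υ x

/-- The two-company claim distribution `F = (λ₁/λ)(F₁ ⊗ δ₀) + (λ₂/λ)(δ₀ ⊗ F₂)`. -/
def Fmix (lam1 lam2 : ℝ) (μ1 μ2 : Measure ℝ) : Measure (Fin 2 → ℝ) :=
  (ENNReal.ofReal (lam1 / (lam1 + lam2))) • Measure.map (fun u : ℝ => ![u, 0]) μ1 +
  (ENNReal.ofReal (lam2 / (lam1 + lam2))) • Measure.map (fun u : ℝ => ![0, u]) μ2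

/-- The two-company penalty `υ(x,α) = −(V₂(x₂)1_{x₁<α₁} + V₁(x₁)1_{x₂<α₂})`. -/
def upsilon2 (V1 V2 : ℝ → ℝ) (x α : Fin 2 → ℝ) : ℝ :=
  -((if x 0 < α 0 then V2 (x 1) else 0) + (if x 1 < α 1 then V1 (x 0) else 0))

/-- The merger switch value `f(x) = V_M(x₁+x₂−c_M)1_{x₁+x₂ ≥ c_M}`. -/
def fmerge (VM : ℝ → ℝ) (cM : ℝ) (x : Fin 2 → ℝ) : ℝ :=
  if cM ≤ x 0 + x 1 then VM (x 0 + x 1 - cM) else 0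

open Set

lemma measurableEmbedding_vec_fst : MeasurableEmbedding (fun u : ℝ => ![u, 0]) := by
  refine .of_measurable_inverse (g := fun v => v 0) (by fun_prop) ?_ (measurable_pi_apply 0)
    fun _ => rfl
  have hrange : range (fun u : ℝ => ![u, 0]) = {v | v 1 = 0} := by
    ext v
    refine ⟨by rintro ⟨u, rfl⟩; rfl, fun (h : v 1 = 0) => ⟨v 0, ?_⟩⟩
    ext i; fin_cases i <;> simp [h]
  rw [hrange]
  exact measurableSet_eq_fun (measurable_pi_apply 1) measurable_const

lemma measurableEmbedding_vec_snd : MeasurableEmbedding (fun u : ℝ => ![0, u]) := by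
  refine .of_measurable_inverse (g := fun v => v 1) (by fun_prop) ?_ (measurable_pi_apply 1)
    fun _ => rfl
  have hrange : range (fun u : ℝ => ![0, u]) = {v | v 0 = 0} := by
    ext v
    refine ⟨by rintro ⟨u, rfl⟩; rfl, fun (h : v 0 = 0) => ⟨v 1, ?_⟩⟩
    ext i; fin_cases i <;> simp [h]
  rw [hrange]
  exact measurableSet_eq_fun (measurable_pi_apply 0) measurable_const

lemma preimage_vec_fst_setOf_nonneg_sub {x : Fin 2 → ℝ} (hx : 0 ≤ x 1) :
    (fun u : ℝ => ![u, 0]) ⁻¹' {α | 0 ≤ x - α} = Iic (x 0) := by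
  ext u; simp [Pi.le_def, Fin.forall_fin_two, hx]

lemma preimage_vec_snd_setOf_nonneg_sub {x : Fin 2 → ℝ} (hx : 0 ≤ x 0) :
    (fun u : ℝ => ![0, u]) ⁻¹' {α | 0 ≤ x - α} = Iic (x 1) := by
  ext u; simp [Pi.le_def, Fin.forall_fin_two, hx]

lemma preimage_vec_fst_setOf_not_nonneg_sub {x : Fin 2 → ℝ} (hx : 0 ≤ x 1) :
    (fun u : ℝ => ![u, 0]) ⁻¹' {α | ¬ 0 ≤ x - α} = Ioi (x 0) := by
  rw [← compl_Iic, ← preimage_vec_fst_setOf_nonneg_sub hx]; rfl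

lemma preimage_vec_snd_setOf_not_nonneg_sub {x : Fin 2 → ℝ} (hx : 0 ≤ x 0) :
    (fun u : ℝ => ![0, u]) ⁻¹' {α | ¬ 0 ≤ x - α} = Ioi (x 1) := by
  rw [← compl_Iic, ← preimage_vec_snd_setOf_nonneg_sub hx]; rfl

section PositiveClaims

variable {μ : Measure ℝ}

lemma Iic_ae_eq_Ioc_zero (hμ : μ (Iic 0) = 0) (a : ℝ) : Iic a =ᵐ[μ] Ioc 0 a := by
  refine ae_eq_set.2 ⟨measure_mono_null (fun u hu => ?_) hμ, by simp⟩
  exact not_lt.1 fun h => hu.2 ⟨h, hu.1⟩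

variable [IsFiniteMeasure μ]

lemma integrableOn_Iic_const_sub (hμ : μ (Iic 0) = 0) (a b : ℝ) :
    IntegrableOn (fun u => b - u) (Iic a) μ :=
  ((continuous_const.sub continuous_id).integrableOn_Icc.mono_set Ioc_subset_Icc_self).congr_set_ae
    (Iic_ae_eq_Ioc_zero hμ a)

lemma setIntegral_Iic_const_sub_le (hμ : μ (Iic 0) = 0) (a b : ℝ) :
    ∫ u in Iic a, (b - u) ∂μ ≤ μ.real (Iic a) * b := by
  rw [setIntegral_congr_set (Iic_ae_eq_Ioc_zero hμ a), measureReal_congr (Iic_ae_eq_Ioc_zero hμ a),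
    ← smul_eq_mul, ← setIntegral_const]
  refine setIntegral_mono_on ((continuous_const.sub continuous_id).integrableOn_Icc.mono_set
    Ioc_subset_Icc_self) (integrable_const b) measurableSet_Ioc fun u hu => ?_
  linarith [hu.1]

end PositiveClaims

section TwoCompanies

variable {lam1 lam2 : ℝ} {μ1 μ2 : Measure ℝ}

lemma mul_setIntegral_Fmix (hlam1 : 0 < lam1) (hlam2 : 0 < lam2) {s : Set (Fin 2 → ℝ)}
    {g : (Fin 2 → ℝ) → ℝ}
    (h1 : IntegrableOn (fun u => g ![u, 0]) ((fun u : ℝ => ![u, 0]) ⁻¹' s) μ1)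
    (h2 : IntegrableOn (fun u => g ![0, u]) ((fun u : ℝ => ![0, u]) ⁻¹' s) μ2) :
    (lam1 + lam2) * ∫ α in s, g α ∂Fmix lam1 lam2 μ1 μ2 =
      lam1 * ∫ u in (fun u : ℝ => ![u, 0]) ⁻¹' s, g ![u, 0] ∂μ1 +
      lam2 * ∫ u in (fun u : ℝ => ![0, u]) ⁻¹' s, g ![0, u] ∂μ2 := by
  have e1 := measurableEmbedding_vec_fst
  have e2 := measurableEmbedding_vec_snd
  rw [Fmix, Measure.restrict_add, Measure.restrict_smul, Measure.restrict_smul, e1.restrict_map,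
    e2.restrict_map, integral_add_measure
      ((e1.integrable_map_iff.2 h1).smul_measure ENNReal.ofReal_ne_top)
      ((e2.integrable_map_iff.2 h2).smul_measure ENNReal.ofReal_ne_top),
    integral_smul_measure, integral_smul_measure, e1.integral_map, e2.integral_map,
    ENNReal.toReal_ofReal (by positivity), ENNReal.toReal_ofReal (by positivity), smul_eq_mul,
    smul_eq_mul]
  field_simp

lemma Iop_Fmix (hlam1 : 0 < lam1) (hlam2 : 0 < lam2) {W : (Fin 2 → ℝ) → ℝ} {x : Fin 2 → ℝ}
    (hx : 0 ≤ x) (h1 : IntegrableOn (fun u => W (x - ![u, 0])) (Iic (x 0)) μ1)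
    (h2 : IntegrableOn (fun u => W (x - ![0, u])) (Iic (x 1)) μ2) :
    Iop 2 (lam1 + lam2) (Fmix lam1 lam2 μ1 μ2) W x =
      lam1 * ∫ u in Iic (x 0), W (x - ![u, 0]) ∂μ1 +
      lam2 * ∫ u in Iic (x 1), W (x - ![0, u]) ∂μ2 := by
  rw [← preimage_vec_fst_setOf_nonneg_sub (hx 1)] at h1 ⊢
  rw [← preimage_vec_snd_setOf_nonneg_sub (hx 0)] at h2 ⊢
  exact mul_setIntegral_Fmix hlam1 hlam2 h1 h2

lemma Rpen_Fmix_upsilon2 [IsFiniteMeasure μ1] [IsFiniteMeasure μ2] (hlam1 : 0 < lam1)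
    (hlam2 : 0 < lam2) (V1 V2 : ℝ → ℝ) {x : Fin 2 → ℝ} (hx : 0 ≤ x) :
    Rpen 2 (lam1 + lam2) (Fmix lam1 lam2 μ1 μ2) (upsilon2 V1 V2) x =
      -(lam1 * μ1.real (Ioi (x 0)) * V2 (x 1) + lam2 * μ2.real (Ioi (x 1)) * V1 (x 0)) := by
  have h1 : EqOn (fun u => upsilon2 V1 V2 x ![u, 0]) (fun _ => -V2 (x 1)) (Ioi (x 0)) := by
    intro u (hu : x 0 < u); simp [upsilon2, hu, (show 0 ≤ x 1 from hx 1).not_gt]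
  have h2 : EqOn (fun u => upsilon2 V1 V2 x ![0, u]) (fun _ => -V1 (x 0)) (Ioi (x 1)) := by
    intro u (hu : x 1 < u); simp [upsilon2, hu, (show 0 ≤ x 0 from hx 0).not_gt]
  rw [Rpen, mul_setIntegral_Fmix hlam1 hlam2, preimage_vec_fst_setOf_not_nonneg_sub (hx 1),
    preimage_vec_snd_setOf_not_nonneg_sub (hx 0), setIntegral_congr_fun measurableSet_Ioi h1,
    setIntegral_congr_fun measurableSet_Ioi h2, setIntegral_const, setIntegral_const]
  · simp only [smul_eq_mul]; ring
  · rw [preimage_vec_fst_setOf_not_nonneg_sub (hx 1)]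
    exact (integrableOn_const (by finiteness)).congr_fun h1.symm measurableSet_Ioi
  · rw [preimage_vec_snd_setOf_not_nonneg_sub (hx 0)]
    exact (integrableOn_const (by finiteness)).congr_fun h2.symm measurableSet_Ioi

lemma Iop_Fmix_affine_le [IsFiniteMeasure μ1] [IsFiniteMeasure μ2] (hlam1 : 0 < lam1)
    (hlam2 : 0 < lam2) (hμ1 : μ1 (Iic 0) = 0) (hμ2 : μ2 (Iic 0) = 0) (k : ℝ) {x : Fin 2 → ℝ}
    (hx : 0 ≤ x) :
    Iop 2 (lam1 + lam2) (Fmix lam1 lam2 μ1 μ2) (fun y => y 0 + y 1 + k) x ≤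
      (lam1 * μ1.real (Iic (x 0)) + lam2 * μ2.real (Iic (x 1))) * (x 0 + x 1 + k) := by
  have e1 : ∀ u, (x - ![u, 0]) 0 + (x - ![u, 0]) 1 + k = x 0 + x 1 + k - u := by
    intro u; simp; ring
  have e2 : ∀ u, (x - ![0, u]) 0 + (x - ![0, u]) 1 + k = x 0 + x 1 + k - u := by
    intro u; simp; ring
  rw [Iop_Fmix hlam1 hlam2 hx (by simpa only [e1] using integrableOn_Iic_const_sub hμ1 _ _)
    (by simpa only [e2] using integrableOn_Iic_const_sub hμ2 _ _)]
  simp only [e1, e2]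
  have h1 := setIntegral_Iic_const_sub_le hμ1 (x 0) (x 0 + x 1 + k)
  have h2 := setIntegral_Iic_const_sub_le hμ2 (x 1) (x 0 + x 1 + k)
  linarith [mul_le_mul_of_nonneg_left h1 hlam1.le, mul_le_mul_of_nonneg_left h2 hlam2.le]

end TwoCompanies

lemma fderiv_affine_apply_single (k : ℝ) (x : Fin 2 → ℝ) (i : Fin 2) :
    fderiv ℝ (fun y : Fin 2 → ℝ => y 0 + y 1 + k) x (Pi.single i 1) = 1 := by
  rw [fderiv_add_const, fderiv_fun_add (by fun_prop) (by fun_prop),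
    fderiv_apply differentiableAt_id, fderiv_apply differentiableAt_id]
  fin_cases i <;> simp

lemma Lop_affine_lt_zero {p : Fin 2 → ℝ} {lam1 lam2 c k : ℝ} {μ1 μ2 : Measure ℝ}
    [IsProbabilityMeasure μ1] [IsProbabilityMeasure μ2] (hlam1 : 0 < lam1) (hlam2 : 0 < lam2)
    (hc : 0 < c) (hμ1 : μ1 (Iic 0) = 0) (hμ2 : μ2 (Iic 0) = 0) (hk : p 0 + p 1 < c * k)
    {V1 V2 : ℝ → ℝ} {x : Fin 2 → ℝ} (hx : 0 ≤ x) (hV1 : V1 (x 0) ≤ x 0 + x 1 + k)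
    (hV2 : V2 (x 1) ≤ x 0 + x 1 + k) :
    Lop 2 p (lam1 + lam2) c (Fmix lam1 lam2 μ1 μ2) (upsilon2 V1 V2)
      (fun y => y 0 + y 1 + k) x < 0 := by
  have hI := Iop_Fmix_affine_le hlam1 hlam2 hμ1 hμ2 k hx
  have hm1 : μ1.real (Iic (x 0)) + μ1.real (Ioi (x 0)) = 1 := by
    rw [← compl_Iic]; exact probReal_add_probReal_compl measurableSet_Iic
  have hm2 : μ2.real (Iic (x 1)) + μ2.real (Ioi (x 1)) = 1 := by
    rw [← compl_Iic]; exact probReal_add_probReal_compl measurableSet_Iic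
  have hR1 := mul_le_mul_of_nonneg_left hV2 (by positivity : 0 ≤ lam1 * μ1.real (Ioi (x 0)))
  have hR2 := mul_le_mul_of_nonneg_left hV1 (by positivity : 0 ≤ lam2 * μ2.real (Ioi (x 1)))
  have hW : c * k ≤ c * (x 0 + x 1 + k) := mul_le_mul_of_nonneg_left
    (by linarith [show 0 ≤ x 0 from hx 0, show 0 ≤ x 1 from hx 1]) hc.le
  rw [Lop, Rpen_Fmix_upsilon2 hlam1 hlam2 V1 V2 hx, Fin.sum_univ_two,
    fderiv_affine_apply_single, fderiv_affine_apply_single]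
  linear_combination hI + hR1 + hR2 + hW + hk + lam1 * (x 0 + x 1 + k) * hm1
    + lam2 * (x 0 + x 1 + k) * hm2

lemma fmerge_sub_affine_lt_zero {VM : ℝ → ℝ} {cM k : ℝ} {x : Fin 2 → ℝ}
    (hVM : ∀ z, 0 ≤ z → VM z < z + cM + k) (hpos : 0 < x 0 + x 1 + k) :
    fmerge VM cM x - (x 0 + x 1 + k) < 0 := by
  unfold fmerge
  split_ifs with h
  · linarith [hVM _ (sub_nonneg.2 h)]
  · linarith

lemma max_max_one_sub_eq_zero {d0 d1 L F : ℝ} (h0 : d0 = 1) (h1 : d1 = 1) (hL : L < 0)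
    (hF : F < 0) : max (max (1 - d0) (1 - d1)) (max L F) = 0 := by
  rw [h0, h1, sub_self, max_self]
  exact max_eq_left (max_le hL.le hF.le)

lemma infinite_of_forall_affine_mem {S : Set ((Fin 2 → ℝ) → ℝ)} (k0 : ℝ)
    (h : ∀ k, k0 ≤ k → (fun y : Fin 2 → ℝ => y 0 + y 1 + k) ∈ S) : S.Infinite :=
  ((Ici_infinite k0).image (f := fun k (y : Fin 2 → ℝ) => y 0 + y 1 + k)
    fun k₁ _ k₂ _ e => by simpa using congrFun e 0).mono (by rintro _ ⟨k, hk, rfl⟩; exact h k hk)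

theorem stmt5_general (p : Fin 2 → ℝ) (hp : ∀ i, 0 < p i)
    (lam1 lam2 c : ℝ) (hlam1 : 0 < lam1) (hlam2 : 0 < lam2) (hc : 0 < c)
    (μ1 μ2 : Measure ℝ) [IsProbabilityMeasure μ1] [IsProbabilityMeasure μ2]
    (hμ1supp : μ1 (Set.Iic 0) = 0) (hμ2supp : μ2 (Set.Iic 0) = 0)
    (V1 V2 VM : ℝ → ℝ)
    (cM : ℝ)
    (k0 : ℝ) (hk0 : (p 0 + p 1) / c < k0)
    (hbV1 : ∀ z, 0 ≤ z → V1 z < z + k0)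
    (hbV2 : ∀ z, 0 ≤ z → V2 z < z + k0)
    (hbVM : ∀ z, 0 ≤ z → VM z < z + cM + k0) :
    (∀ k, k0 ≤ k →
      ContDiff ℝ 1 (fun x : Fin 2 → ℝ => x 0 + x 1 + k) ∧
      ∀ x : Fin 2 → ℝ, 0 ≤ x →
        (∀ i : Fin 2,
          fderiv ℝ (fun y : Fin 2 → ℝ => y 0 + y 1 + k) x (Pi.single i 1) = 1) ∧
        fmerge VM cM x - (x 0 + x 1 + k) < 0 ∧
        Lop 2 p (lam1 + lam2) c (Fmix lam1 lam2 μ1 μ2) (upsilon2 V1 V2)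
          (fun y : Fin 2 → ℝ => y 0 + y 1 + k) x < 0 ∧
        max (max
            (1 - fderiv ℝ (fun y : Fin 2 → ℝ => y 0 + y 1 + k) x (Pi.single 0 1))
            (1 - fderiv ℝ (fun y : Fin 2 → ℝ => y 0 + y 1 + k) x (Pi.single 1 1)))
          (max
            (Lop 2 p (lam1 + lam2) c (Fmix lam1 lam2 μ1 μ2) (upsilon2 V1 V2)
              (fun y : Fin 2 → ℝ => y 0 + y 1 + k) x)
            (fmerge VM cM x - (x 0 + x 1 + k))) = 0) ∧
    {W : (Fin 2 → ℝ) → ℝ | ContDiff ℝ 1 W ∧ ∀ x : Fin 2 → ℝ, 0 ≤ x →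
      max (max
          (1 - fderiv ℝ W x (Pi.single 0 1))
          (1 - fderiv ℝ W x (Pi.single 1 1)))
        (max
          (Lop 2 p (lam1 + lam2) c (Fmix lam1 lam2 μ1 μ2) (upsilon2 V1 V2) W x)
          (fmerge VM cM x - W x)) = 0}.Infinite := by
  have hk0pos : 0 < k0 := (div_pos (add_pos (hp 0) (hp 1)) hc).trans hk0
  have hpk : ∀ k, k0 ≤ k → p 0 + p 1 < c * k := fun k hk =>
    ((div_lt_iff₀' hc).1 hk0).trans_le (mul_le_mul_of_nonneg_left hk hc.le)
  have hL : ∀ k, k0 ≤ k → ∀ x : Fin 2 → ℝ, 0 ≤ x →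
      Lop 2 p (lam1 + lam2) c (Fmix lam1 lam2 μ1 μ2) (upsilon2 V1 V2)
        (fun y => y 0 + y 1 + k) x < 0 := fun k hk x hx =>
    Lop_affine_lt_zero hlam1 hlam2 hc hμ1supp hμ2supp (hpk k hk) hx
      (by linarith [hbV1 _ (hx 0), show 0 ≤ x 1 from hx 1])
      (by linarith [hbV2 _ (hx 1), show 0 ≤ x 0 from hx 0])
  have hf : ∀ k, k0 ≤ k → ∀ x : Fin 2 → ℝ, 0 ≤ x → fmerge VM cM x - (x 0 + x 1 + k) < 0 :=
    fun k hk x hx => fmerge_sub_affine_lt_zero (fun z hz => by linarith [hbVM z hz])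
      (by linarith [show 0 ≤ x 0 from hx 0, show 0 ≤ x 1 from hx 1])
  have hjb : ∀ k, k0 ≤ k → ∀ x : Fin 2 → ℝ, 0 ≤ x → _ := fun k hk x hx =>
    max_max_one_sub_eq_zero (fderiv_affine_apply_single k x 0) (fderiv_affine_apply_single k x 1)
      (hL k hk x hx) (hf k hk x hx)
  refine ⟨fun k hk => ⟨by fun_prop, fun x hx =>
    ⟨fderiv_affine_apply_single k x, hf k hk x hx, hL k hk x hx, hjb k hk x hx⟩⟩, ?_⟩
  exact infinite_of_forall_affine_mem k0 fun k hk => ⟨by fun_prop, hjb k hk⟩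

/-- in the two-company setting, each `W_k(x) = x₁ + x₂ + k`, `k ≥ k₀`, solves
the HJB equation classically; in particular the HJB equation admits infinitely many
classical solutions. -/
theorem stmt5 (p : Fin 2 → ℝ) (hp : ∀ i, 0 < p i)
    (lam1 lam2 c : ℝ) (hlam1 : 0 < lam1) (hlam2 : 0 < lam2) (hc : 0 < c)
    (μ1 μ2 : Measure ℝ) [IsProbabilityMeasure μ1] [IsProbabilityMeasure μ2]
    (hμ1supp : μ1 (Set.Iic 0) = 0) (hμ2supp : μ2 (Set.Iic 0) = 0)
    (hμ1cont : ∀ x : ℝ, μ1 {x} = 0) (hμ2cont : ∀ x : ℝ, μ2 {x} = 0)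
    (V1 V2 VM : ℝ → ℝ)
    (hV1mono : MonotoneOn V1 (Set.Ici 0)) (hV2mono : MonotoneOn V2 (Set.Ici 0))
    (hVMmono : MonotoneOn VM (Set.Ici 0))
    (hV1cont : ContinuousOn V1 (Set.Ici 0)) (hV2cont : ContinuousOn V2 (Set.Ici 0))
    (hVMcont : ContinuousOn VM (Set.Ici 0))
    (hV1nonneg : ∀ z, 0 ≤ z → 0 ≤ V1 z) (hV2nonneg : ∀ z, 0 ≤ z → 0 ≤ V2 z)
    (hVMnonneg : ∀ z, 0 ≤ z → 0 ≤ VM z)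
    (cM : ℝ) (hcM : 0 ≤ cM)
    (k0 : ℝ) (hk0 : (p 0 + p 1) / c < k0)
    (hbV1 : ∀ z, 0 ≤ z → V1 z < z + k0)
    (hbV2 : ∀ z, 0 ≤ z → V2 z < z + k0)
    (hbVM : ∀ z, 0 ≤ z → VM z < z + cM + k0) :
    (∀ k, k0 ≤ k →
      ContDiff ℝ 1 (fun x : Fin 2 → ℝ => x 0 + x 1 + k) ∧
      ∀ x : Fin 2 → ℝ, 0 ≤ x →
        (∀ i : Fin 2,
          fderiv ℝ (fun y : Fin 2 → ℝ => y 0 + y 1 + k) x (Pi.single i 1) = 1) ∧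
        fmerge VM cM x - (x 0 + x 1 + k) < 0 ∧
        Lop 2 p (lam1 + lam2) c (Fmix lam1 lam2 μ1 μ2) (upsilon2 V1 V2)
          (fun y : Fin 2 → ℝ => y 0 + y 1 + k) x < 0 ∧
        max (max
            (1 - fderiv ℝ (fun y : Fin 2 → ℝ => y 0 + y 1 + k) x (Pi.single 0 1))
            (1 - fderiv ℝ (fun y : Fin 2 → ℝ => y 0 + y 1 + k) x (Pi.single 1 1)))
          (max
            (Lop 2 p (lam1 + lam2) c (Fmix lam1 lam2 μ1 μ2) (upsilon2 V1 V2)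
              (fun y : Fin 2 → ℝ => y 0 + y 1 + k) x)
            (fmerge VM cM x - (x 0 + x 1 + k))) = 0) ∧
    {W : (Fin 2 → ℝ) → ℝ | ContDiff ℝ 1 W ∧ ∀ x : Fin 2 → ℝ, 0 ≤ x →
      max (max
          (1 - fderiv ℝ W x (Pi.single 0 1))
          (1 - fderiv ℝ W x (Pi.single 1 1)))
        (max
          (Lop 2 p (lam1 + lam2) c (Fmix lam1 lam2 μ1 μ2) (upsilon2 V1 V2) W x)
          (fmerge VM cM x - W x)) = 0}.Infinite :=
  stmt5_general p hp lam1 lam2 c hlam1 hlam2 hc μ1 μ2 hμ1supp hμ2supp V1 V2 VM cM k0 hk0 hbV1 hbV2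
    hbVM

end
end

section
/- Let S(x) := sup{ −υ(x,α) : α ∈ ℝ_+^n, x − α ∉ ℝ_+^n } and assume that f and S satisfy the growth condition GC. Then there exists b_0 > 0 such that for every b ≥ b_0 the continuously differentiable function W = b·h_0 is a classical supersolution of the HJB equation on ℝ_+^n, i.e. for every x ∈ ℝ_+^n: a_i − ∂_{x_i}(b h_0)(x) ≤ 0 for all i, L(b h_0)(x) ≤ 0, and f(x) − b h_0(x) ≤ 0. -/
/-!
Since `∂ᵢh₀ = (c/(2n)) h₀ / pᵢ`, the transport term of `L(b h₀)` is `(c/2) b h₀`. As `h₀` is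
increasing and `F` is carried by `ℝ₊ⁿ`, the integral term is at most `λ b h₀(x)`, and `−R(x)` is at
most `λ S(x)⁺ ≤ λ M h₀(x)` by GC for `S`. Hence `L(b h₀) ≤ (λ M − (c/2) b) h₀ ≤ 0` once `b` is large;
the gradient condition holds because `h₀ ≥ 1` on `ℝ₊ⁿ`, and `f ≤ b h₀` is GC for `f`.
-/

open MeasureTheory Filter

noncomputable section

/-- The reference growth function `h₀(x) = exp((c/(2n)) Σᵢ xᵢ/pᵢ)`. -/
def hGrow (n : ℕ) (p : Fin n → ℝ) (c : ℝ) (x : Fin n → ℝ) : ℝ :=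
  Real.exp (c / (2 * n) * ∑ i, x i / p i)

/-- The growth condition GC: `h/h₀` is bounded above on `ℝ₊ⁿ`. -/
def GrowthGC (n : ℕ) (p : Fin n → ℝ) (c : ℝ) (h : (Fin n → ℝ) → ℝ) : Prop :=
  ∃ M : ℝ, ∀ x : Fin n → ℝ, 0 ≤ x → h x / hGrow n p c x ≤ M

/-- `S(x) = sup{−υ(x,α) : α ∈ ℝ₊ⁿ, x − α ∉ ℝ₊ⁿ}`. -/
def Spen (n : ℕ) (υ : (Fin n → ℝ) → (Fin n → ℝ) → ℝ) (x : Fin n → ℝ) : ℝ :=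
  sSup {y : ℝ | ∃ α : Fin n → ℝ, 0 ≤ α ∧ ¬ 0 ≤ x - α ∧ y = -υ x α}

lemma setIntegral_le_of_ae_restrict_le {Ω : Type*} [MeasurableSpace Ω] {μ : Measure Ω}
    [IsZeroOrProbabilityMeasure μ] {s : Set Ω} {g : Ω → ℝ} {C : ℝ} (hC : 0 ≤ C)
    (hg : ∀ᵐ ω ∂μ.restrict s, g ω ≤ C) : ∫ ω in s, g ω ∂μ ≤ C := by
  by_cases hi : IntegrableOn g s μ
  · calc ∫ ω in s, g ω ∂μ ≤ ∫ _ in s, C ∂μ :=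
          setIntegral_mono_ae_restrict hi (integrable_const C) hg
      _ = μ.real s * C := by rw [setIntegral_const, smul_eq_mul]
      _ ≤ C := mul_le_of_le_one_left hC measureReal_le_one
  · rw [integral_undef hi]
    exact hC

lemma GrowthGC.exists_nonneg_le_mul {n : ℕ} {p : Fin n → ℝ} {c : ℝ} {h : (Fin n → ℝ) → ℝ}
    (hh : GrowthGC n p c h) : ∃ M, 0 ≤ M ∧ ∀ x, 0 ≤ x → h x ≤ M * hGrow n p c x := by
  obtain ⟨M, hM⟩ := hh
  refine ⟨max M 0, le_max_right _ _, fun x hx => ?_⟩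
  calc h x ≤ M * hGrow n p c x := (div_le_iff₀ (Real.exp_pos _)).mp (hM x hx)
    _ ≤ max M 0 * hGrow n p c x := by gcongr; exacts [(Real.exp_pos _).le, le_max_left _ _]

section hGrow

variable {n : ℕ} {p : Fin n → ℝ} {c : ℝ}

lemma hGrow_pos (x : Fin n → ℝ) : 0 < hGrow n p c x := Real.exp_pos _

lemma hGrow_monotone (hc : 0 ≤ c) (hp : ∀ i, 0 ≤ p i) : Monotone (hGrow n p c) := by
  intro x y hxy
  unfold hGrow
  gcongr with i
  exacts [hp i, hxy i]

lemma one_le_hGrow (hc : 0 ≤ c) (hp : ∀ i, 0 ≤ p i) {x : Fin n → ℝ} (hx : 0 ≤ x) :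
    1 ≤ hGrow n p c x := by
  simpa [hGrow] using hGrow_monotone hc hp hx

lemma hasFDerivAt_hGrow (x : Fin n → ℝ) :
    HasFDerivAt (hGrow n p c)
      (hGrow n p c x • (c / (2 * n)) •
        ∑ i, (p i)⁻¹ • (ContinuousLinearMap.proj i : (Fin n → ℝ) →L[ℝ] ℝ)) x := by
  set ℓ : (Fin n → ℝ) →L[ℝ] ℝ := ∑ i, (p i)⁻¹ • ContinuousLinearMap.proj i
  have hℓ : ∀ y, ℓ y = ∑ i, y i / p i := fun y => by
    simp [ℓ, div_eq_inv_mul]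
  have h := ((ℓ.hasFDerivAt (x := x)).const_mul (c / (2 * n))).exp
  simp only [hℓ] at h
  exact h

lemma fderiv_const_mul_hGrow_single (b : ℝ) (x : Fin n → ℝ) (i : Fin n) :
    fderiv ℝ (fun y => b * hGrow n p c y) x (Pi.single i 1)
      = b * hGrow n p c x * (c / (2 * n)) / p i := by
  rw [((hasFDerivAt_hGrow x).const_mul b).fderiv]
  simp [Pi.single_apply, smul_smul, mul_assoc, div_eq_mul_inv]

lemma le_fderiv_const_mul_hGrow_single (hc : 0 ≤ c) (hp : ∀ i, 0 < p i) {x : Fin n → ℝ}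
    (hx : 0 ≤ x) {b : ℝ} (hb : 0 ≤ b) {i : Fin n} {A : ℝ} (hA : A * p i ≤ b * (c / (2 * n))) :
    A ≤ fderiv ℝ (fun y => b * hGrow n p c y) x (Pi.single i 1) := by
  rw [fderiv_const_mul_hGrow_single, le_div_iff₀ (hp i), mul_right_comm]
  calc A * p i ≤ b * (c / (2 * n)) := hA
    _ ≤ b * (c / (2 * n)) * hGrow n p c x :=
      le_mul_of_one_le_right (by positivity) (one_le_hGrow hc (fun i => (hp i).le) hx)

lemma sum_mul_fderiv_const_mul_hGrow (hn : n ≠ 0) (hp : ∀ i, p i ≠ 0) (b : ℝ)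
    (x : Fin n → ℝ) :
    ∑ i, p i * fderiv ℝ (fun y => b * hGrow n p c y) x (Pi.single i 1)
      = c / 2 * (b * hGrow n p c x) := by
  simp only [fderiv_const_mul_hGrow_single, mul_div_cancel₀ _ (hp _), Finset.sum_const,
    Finset.card_univ, Fintype.card_fin, nsmul_eq_mul]
  field_simp

end hGrow

section Generator

variable {n : ℕ} {lam : ℝ} {F : Measure (Fin n → ℝ)} [IsProbabilityMeasure F]

lemma Iop_le_of_monotone (hlam : 0 ≤ lam) (hF : ∀ᵐ α ∂F, 0 ≤ α) {W : (Fin n → ℝ) → ℝ}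
    (hW : Monotone W) {x : Fin n → ℝ} (hWx : 0 ≤ W x) : Iop n lam F W x ≤ lam * W x := by
  refine mul_le_mul_of_nonneg_left (setIntegral_le_of_ae_restrict_le hWx ?_) hlam
  exact ae_restrict_of_ae (hF.mono fun α hα => hW (sub_le_self x hα))

lemma le_Spen {υ : (Fin n → ℝ) → (Fin n → ℝ) → ℝ} {x α : Fin n → ℝ} (hυ : Monotone (υ x))
    (hα : 0 ≤ α) (hxα : ¬ 0 ≤ x - α) : -υ x α ≤ Spen n υ x := by
  refine le_csSup ⟨-υ x 0, ?_⟩ ⟨α, hα, hxα, rfl⟩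
  rintro y ⟨β, hβ, -, rfl⟩
  exact neg_le_neg (hυ hβ)

lemma neg_Rpen_le (hlam : 0 ≤ lam) (hF : ∀ᵐ α ∂F, 0 ≤ α)
    {υ : (Fin n → ℝ) → (Fin n → ℝ) → ℝ} {x : Fin n → ℝ} (hυ : Monotone (υ x)) :
    -Rpen n lam F υ x ≤ lam * max (Spen n υ x) 0 := by
  have hs : MeasurableSet {α : Fin n → ℝ | ¬ 0 ≤ x - α} :=
    (isClosed_le continuous_const (continuous_const.sub continuous_id)).measurableSet.compl
  have hbound : ∀ᵐ α ∂F.restrict {α | ¬ 0 ≤ x - α}, -υ x α ≤ max (Spen n υ x) 0 := by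
    filter_upwards [ae_restrict_mem hs, ae_restrict_of_ae hF] with α hxα hα
    exact (le_Spen hυ hα hxα).trans (le_max_left _ _)
  rw [Rpen, ← mul_neg, ← integral_neg]
  exact mul_le_mul_of_nonneg_left
    (setIntegral_le_of_ae_restrict_le (le_max_right _ _) hbound) hlam

lemma Lop_const_mul_hGrow_nonpos (hn : n ≠ 0) {p : Fin n → ℝ} (hp : ∀ i, 0 < p i)
    (hlam : 0 ≤ lam) {c : ℝ} (hc : 0 < c) (hF : ∀ᵐ α ∂F, 0 ≤ α)
    {υ : (Fin n → ℝ) → (Fin n → ℝ) → ℝ} {M : ℝ} (hM : 0 ≤ M)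
    {x : Fin n → ℝ} (hυ : Monotone (υ x))
    (hS : Spen n υ x ≤ M * hGrow n p c x) {b : ℝ} (hb : 2 * lam * M / c ≤ b) :
    Lop n p lam c F υ (fun y => b * hGrow n p c y) x ≤ 0 := by
  have hh := hGrow_pos (p := p) (c := c) x
  have hb0 : 0 ≤ b := (by positivity : 0 ≤ 2 * lam * M / c).trans hb
  have hI := Iop_le_of_monotone hlam hF
    ((hGrow_monotone hc.le fun i => (hp i).le).const_mul hb0) (by positivity : 0 ≤ b * _)
  have hR := neg_Rpen_le hlam hF (F := F) hυ
  have hS' : lam * max (Spen n υ x) 0 ≤ lam * M * hGrow n p c x := by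
    rw [mul_assoc]
    exact mul_le_mul_of_nonneg_left (max_le hS (by positivity)) hlam
  have hbc : lam * M ≤ c / 2 * b := by
    rw [div_le_iff₀ hc] at hb
    linarith
  rw [Lop, sum_mul_fderiv_const_mul_hGrow hn (fun i => (hp i).ne')]
  linarith [mul_le_mul_of_nonneg_right hbc hh.le]

end Generator

theorem stmt6_general (n : ℕ) (hn : 1 ≤ n) (p a : Fin n → ℝ)
    (hp : ∀ i, 0 < p i) (ha : ∀ i, 0 < a i)
    (lam c : ℝ) (hlam : 0 < lam) (hc : 0 < c)
    (F : Measure (Fin n → ℝ)) [IsProbabilityMeasure F]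
    (hFpos : F {α | ¬ 0 ≤ α} = 0)
    (υ : (Fin n → ℝ) → (Fin n → ℝ) → ℝ)
    (hυα : ∀ x α₁ α₂ : Fin n → ℝ, α₁ ≤ α₂ → υ x α₁ ≤ υ x α₂)
    (f : (Fin n → ℝ) → ℝ)
    (hfGC : GrowthGC n p c f) (hSGC : GrowthGC n p c (Spen n υ)) :
    ∃ b0 : ℝ, 0 < b0 ∧ ∀ b, b0 ≤ b → ∀ x : Fin n → ℝ, 0 ≤ x →
      (∀ i, a i - fderiv ℝ (fun y => b * hGrow n p c y) x (Pi.single i 1) ≤ 0) ∧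
      Lop n p lam c F υ (fun y => b * hGrow n p c y) x ≤ 0 ∧
      f x - b * hGrow n p c x ≤ 0 := by
  obtain ⟨Mf, hMf0, hMf⟩ := hfGC.exists_nonneg_le_mul
  obtain ⟨MS, hMS0, hMS⟩ := hSGC.exists_nonneg_le_mul
  have hκ : 0 < c / (2 * n) := by positivity
  have hterm : ∀ i, 0 < a i * p i / (c / (2 * n)) := fun i => div_pos (mul_pos (ha i) (hp i)) hκ
  have hsum : 0 < ∑ i, a i * p i / (c / (2 * n)) :=
    Finset.sum_pos (fun i _ => hterm i) ⟨⟨0, hn⟩, Finset.mem_univ _⟩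
  have hSterm : 0 ≤ 2 * lam * MS / c := by positivity
  refine ⟨∑ i, a i * p i / (c / (2 * n)) + Mf + 2 * lam * MS / c, by positivity,
    fun b hb x hx => ⟨fun i => ?_, ?_, ?_⟩⟩
  · have hai : a i * p i / (c / (2 * n)) ≤ b := by
      have := Finset.single_le_sum (fun j _ => (hterm j).le) (Finset.mem_univ i)
      linarith
    exact sub_nonpos.mpr <| le_fderiv_const_mul_hGrow_single hc.le hp hx (by linarith)
      ((div_le_iff₀ hκ).mp hai)
  · exact Lop_const_mul_hGrow_nonpos (by omega) hp hlam.le hc (ae_iff.mpr hFpos) hMS0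
      (fun _ _ h => hυα x _ _ h) (hMS x hx) (by linarith)
  · rw [sub_nonpos]
    calc f x ≤ Mf * hGrow n p c x := hMf x hx
      _ ≤ b * hGrow n p c x := by gcongr; exacts [(hGrow_pos x).le, by linarith]

/-- if `f` and `S` satisfy GC then `b·h₀` is a classical supersolution of the
HJB equation for all `b` large enough. -/
theorem stmt6 (n : ℕ) (hn : 1 ≤ n) (p a : Fin n → ℝ)
    (hp : ∀ i, 0 < p i) (ha : ∀ i, 0 < a i)
    (lam c : ℝ) (hlam : 0 < lam) (hc : 0 < c)
    (F : Measure (Fin n → ℝ)) [IsProbabilityMeasure F]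
    (hFpos : F {α | ¬ 0 ≤ α} = 0) (hF0 : F {0} = 0)
    (hFmom : Integrable (fun α => ‖α‖) F)
    (υ : (Fin n → ℝ) → (Fin n → ℝ) → ℝ) (hυmeas : Measurable (Function.uncurry υ))
    (hυint : Integrable (fun α => |υ 0 α|) F)
    (hυx : ∀ α x₁ x₂ : Fin n → ℝ, x₁ ≤ x₂ → υ x₂ α ≤ υ x₁ α)
    (hυα : ∀ x α₁ α₂ : Fin n → ℝ, α₁ ≤ α₂ → υ x α₁ ≤ υ x α₂)
    (hRcont : ContinuousOn (Rpen n lam F υ) {x | 0 ≤ x})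
    (f : (Fin n → ℝ) → ℝ)
    (hfGC : GrowthGC n p c f) (hSGC : GrowthGC n p c (Spen n υ)) :
    ∃ b0 : ℝ, 0 < b0 ∧ ∀ b, b0 ≤ b → ∀ x : Fin n → ℝ, 0 ≤ x →
      (∀ i, a i - fderiv ℝ (fun y => b * hGrow n p c y) x (Pi.single i 1) ≤ 0) ∧
      Lop n p lam c F υ (fun y => b * hGrow n p c y) x ≤ 0 ∧
      f x - b * hGrow n p c x ≤ 0 :=
  stmt6_general n hn p a hp ha lam c hlam hc F hFpos υ hυα f hfGC hSGC
end
end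

section
/- Let δ > 0 and let v : ℕ_0^n → [0,∞) satisfy v(m+e_i) − v(m) ≥ a_i p_i δ for every i and v(m+1) − v(m) ≤ v(m)(e^{(c+λ)δ} − 1) for every m ∈ ℕ_0^n. Define the extension V(x) := v(ρ^δ(x)) + a·(x − ⟨x⟩^δ) for x ∈ ℝ_+^n. Then for all x, y ∈ ℝ_+^n, |V(y) − V(x)| ≤ ‖⟨y⟩^δ − ⟨x⟩^δ‖_1 · (2/p̂) · V(⟨x∨y⟩^δ) · ((e^{(c+λ)δ} − 1)/δ) + 2δ a·p, where x∨y is the componentwise maximum, ‖·‖_1 is the ℓ¹ norm and p̂ = min_i p_i. -/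
open MeasureTheory Filter

noncomputable section

/-- The extension `V(x) = v(ρ^δ(x)) + a·(x − ⟨x⟩^δ)` of a grid function `v`. -/
def Vext (n : ℕ) (p a : Fin n → ℝ) (δ : ℝ) (v : (Fin n → ℕ) → ℝ) (x : Fin n → ℝ) : ℝ :=
  v (rho n p δ x) + ∑ i, a i * (x i - proj n p δ x i)

/-! The grid function `v` increases in every coordinate step, so it is monotone, and since
`m + eᵢ ≤ m + 1` a unit step from `m` raises it by at most `K v(m)`, `K = e^{(c+λ)δ} − 1`.
Walking from `ρ(x)` and from `ρ(y)` up to their join `ρ(x ∨ y) = ρ(x) ∨ ρ(y)` along lattice paths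
bounds `|v(ρ y) − v(ρ x)|` by `‖ρ y − ρ x‖₁ · K · v(ρ(x ∨ y))`, and
`p̂ δ ‖ρ y − ρ x‖₁ ≤ ‖⟨y⟩ − ⟨x⟩‖₁`. The interpolating part of `V` moves by at most `δ a·p`, because
`x − ⟨x⟩` lies in `[0, δp)` coordinatewise. -/

section GridFunction

variable {ι : Type*} [DecidableEq ι]

theorem Pi.nat_induction_add_single [Finite ι] {motive : (ι → ℕ) → Prop} (zero : motive 0)
    (step : ∀ k i, motive k → motive (k + Pi.single i 1)) (k : ι → ℕ) : motive k := by
  suffices ∀ j, motive j → motive (j + k) by simpa using this 0 zero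
  induction k using Pi.single_induction with
  | zero => simp
  | add f g hf hg => exact fun j hj => add_assoc j f g ▸ hg _ (hf j hj)
  | single i r =>
    intro j hj
    induction r with
    | zero => simpa using hj
    | succ r ih => rw [Pi.single_add, ← add_assoc]; exact step _ i ih

theorem Pi.single_one_le_one (i : ι) : (Pi.single i 1 : ι → ℕ) ≤ 1 := fun j => by
  by_cases h : j = i <;> simp [h]

variable [Fintype ι]

theorem sub_le_sum_mul_of_step_le (f : (ι → ℕ) → ℝ) (C : ℝ) (m k : ι → ℕ)
    (hstep : ∀ m' i, m ≤ m' → m' + Pi.single i 1 ≤ m + k →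
      f (m' + Pi.single i 1) - f m' ≤ C) :
    f (m + k) - f m ≤ (∑ i, (k i : ℝ)) * C := by
  induction k using Pi.nat_induction_add_single with
  | zero => simp
  | step k i ih =>
    have hk : m + k ≤ m + (k + Pi.single i 1) := by simp
    have hpath := ih fun m' j h₁ h₂ => hstep m' j h₁ (h₂.trans hk)
    have hlast := hstep (m + k) i le_self_add (add_assoc m k _).le
    have hsum : ∑ j, ((k + Pi.single i 1 : ι → ℕ) j : ℝ) = ∑ j, (k j : ℝ) + 1 := by
      simp [Finset.sum_add_distrib, Pi.single_apply]
    rw [hsum, ← add_assoc]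
    linarith

theorem monotone_of_le_add_single {f : (ι → ℕ) → ℝ}
    (h : ∀ m i, f m ≤ f (m + Pi.single i 1)) : Monotone f := by
  intro m M hmM
  obtain ⟨k, rfl⟩ := exists_add_of_le hmM
  have := sub_le_sum_mul_of_step_le (-f) 0 m k fun m' i _ _ => by simpa using h m' i
  simpa using this

section Lipschitz

variable {v : (ι → ℕ) → ℝ} {K : ℝ} (hmono : Monotone v) (hK : 0 ≤ K)
  (hstep : ∀ m i, v (m + Pi.single i 1) - v m ≤ K * v m)
include hmono hK hstep

theorem sub_le_sum_tsub_mul_of_step_le_mul {m M : ι → ℕ} (hmM : m ≤ M) :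
    v M - v m ≤ (∑ i, ((M i - m i : ℕ) : ℝ)) * (K * v M) := by
  obtain ⟨k, rfl⟩ := exists_add_of_le hmM
  simp only [Pi.add_apply, add_tsub_cancel_left]
  refine sub_le_sum_mul_of_step_le v _ m k fun m' i _ hle => ?_
  calc v (m' + Pi.single i 1) - v m' ≤ K * v m' := hstep m' i
    _ ≤ K * v (m + k) := mul_le_mul_of_nonneg_left (hmono (le_self_add.trans hle)) hK

theorem abs_sub_le_sum_abs_mul_of_step_le_mul (m₁ m₂ : ι → ℕ) (hv : 0 ≤ v (m₁ ⊔ m₂)) :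
    |v m₂ - v m₁| ≤ (∑ i, |(m₂ i : ℝ) - m₁ i|) * (K * v (m₁ ⊔ m₂)) := by
  have hKv : 0 ≤ K * v (m₁ ⊔ m₂) := mul_nonneg hK hv
  have hcoord : ∀ a b : ℕ, ((max a b - a : ℕ) : ℝ) ≤ |(b : ℝ) - a| ∧
      ((max a b - b : ℕ) : ℝ) ≤ |(b : ℝ) - a| := fun a b => by
    rcases le_total a b with h | h
    · simp [h, Nat.cast_sub, le_abs_self]
    · simp [h, Nat.cast_sub, abs_sub_comm, le_abs_self]
  have h₁ := sub_le_sum_tsub_mul_of_step_le_mul hmono hK hstep (le_sup_left : m₁ ≤ m₁ ⊔ m₂)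
  have h₂ := sub_le_sum_tsub_mul_of_step_le_mul hmono hK hstep (le_sup_right : m₂ ≤ m₁ ⊔ m₂)
  have hs₁ : (∑ i, (((m₁ ⊔ m₂) i - m₁ i : ℕ) : ℝ)) ≤ ∑ i, |(m₂ i : ℝ) - m₁ i| :=
    Finset.sum_le_sum fun i _ => (hcoord (m₁ i) (m₂ i)).1
  have hs₂ : (∑ i, (((m₁ ⊔ m₂) i - m₂ i : ℕ) : ℝ)) ≤ ∑ i, |(m₂ i : ℝ) - m₁ i| :=
    Finset.sum_le_sum fun i _ => (hcoord (m₁ i) (m₂ i)).2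
  have hv₁ := hmono (le_sup_left : m₁ ≤ m₁ ⊔ m₂)
  have hv₂ := hmono (le_sup_right : m₂ ≤ m₁ ⊔ m₂)
  rw [abs_le]
  constructor
  · linarith [mul_le_mul_of_nonneg_right hs₂ hKv]
  · linarith [mul_le_mul_of_nonneg_right hs₁ hKv]

end Lipschitz

end GridFunction

section Grid

variable {n : ℕ} {p : Fin n → ℝ} {δ : ℝ} (hp : ∀ i, 0 < p i) (hδ : 0 < δ)
include hp hδ

theorem rho_gdel (q : Fin n → ℕ) : rho n p δ (gdel n p δ q) = q := by
  funext i
  simp only [rho, gdel]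
  rw [mul_comm (p i) δ, mul_div_cancel_left₀ _ (mul_pos hδ (hp i)).ne', Nat.floor_natCast]

theorem Vext_proj (a : Fin n → ℝ) (v : (Fin n → ℕ) → ℝ) (z : Fin n → ℝ) :
    Vext n p a δ v (proj n p δ z) = v (rho n p δ z) := by
  simp [Vext, proj, rho_gdel hp hδ]

theorem rho_sup (x y : Fin n → ℝ) : rho n p δ (x ⊔ y) = rho n p δ x ⊔ rho n p δ y := by
  funext i
  have hdiv : Monotone fun t : ℝ => t / (δ * p i) :=
    fun _ _ h => div_le_div_of_nonneg_right h (mul_pos hδ (hp i)).le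
  exact (Nat.floor_mono.comp hdiv).map_max

theorem proj_le {x : Fin n → ℝ} {i : Fin n} (hx : 0 ≤ x i) : proj n p δ x i ≤ x i := by
  have hc := mul_pos hδ (hp i)
  have h := (le_div_iff₀ hc).1 (Nat.floor_le (div_nonneg hx hc.le))
  simp only [proj, gdel, rho]
  linarith

theorem sub_proj_lt (x : Fin n → ℝ) (i : Fin n) : x i - proj n p δ x i < δ * p i := by
  have h := (div_lt_iff₀ (mul_pos hδ (hp i))).1 (Nat.lt_floor_add_one (x i / (δ * p i)))
  simp only [proj, gdel, rho]
  linarith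

theorem abs_proj_sub_proj (x y : Fin n → ℝ) (i : Fin n) :
    |proj n p δ y i - proj n p δ x i| = p i * δ * |(rho n p δ y i : ℝ) - rho n p δ x i| := by
  simp only [proj, gdel]
  rw [← mul_sub, abs_mul, abs_of_pos (mul_pos (hp i) hδ)]

theorem iInf_mul_sum_abs_sub_rho_le (x y : Fin n → ℝ) :
    (⨅ i, p i) * δ * ∑ i, |(rho n p δ y i : ℝ) - rho n p δ x i| ≤
      ∑ i, |proj n p δ y i - proj n p δ x i| := by
  rw [Finset.mul_sum]
  gcongr with i
  rw [abs_proj_sub_proj hp hδ]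
  gcongr
  exact ciInf_le (Finite.bddBelow_range p) i

theorem abs_sum_sub_proj_sub_le {a : Fin n → ℝ} (ha : ∀ i, 0 ≤ a i) {x y : Fin n → ℝ}
    (hx : 0 ≤ x) (hy : 0 ≤ y) :
    |∑ i, a i * (y i - proj n p δ y i) - ∑ i, a i * (x i - proj n p δ x i)| ≤
      δ * ∑ i, a i * p i := by
  rw [← Finset.sum_sub_distrib, Finset.mul_sum]
  refine (Finset.abs_sum_le_sum_abs _ _).trans (Finset.sum_le_sum fun i _ => ?_)
  have hx₁ := proj_le hp hδ (hx i)
  have hy₁ := proj_le hp hδ (hy i)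
  have hx₂ := sub_proj_lt hp hδ x i
  have hy₂ := sub_proj_lt hp hδ y i
  rw [← mul_sub, abs_mul, abs_of_nonneg (ha i), mul_left_comm]
  exact mul_le_mul_of_nonneg_left (abs_sub_le_iff.2 ⟨by linarith, by linarith⟩) (ha i)

theorem abs_Vext_sub_Vext_le {a : Fin n → ℝ} (ha : ∀ i, 0 ≤ a i) {v : (Fin n → ℕ) → ℝ} {K : ℝ}
    (hmono : Monotone v) (hK : 0 ≤ K) (hstep : ∀ m i, v (m + Pi.single i 1) - v m ≤ K * v m)
    (hv : ∀ m, 0 ≤ v m) {x y : Fin n → ℝ} (hx : 0 ≤ x) (hy : 0 ≤ y) :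
    |Vext n p a δ v y - Vext n p a δ v x| ≤
      (∑ i, |(rho n p δ y i : ℝ) - rho n p δ x i|) * (K * v (rho n p δ x ⊔ rho n p δ y)) +
        δ * ∑ i, a i * p i := by
  have hsplit : Vext n p a δ v y - Vext n p a δ v x = (v (rho n p δ y) - v (rho n p δ x)) +
      (∑ i, a i * (y i - proj n p δ y i) - ∑ i, a i * (x i - proj n p δ x i)) := by
    simp only [Vext]; ring
  rw [hsplit]
  exact (abs_add_le _ _).trans <| add_le_add
    (abs_sub_le_sum_abs_mul_of_step_le_mul hmono hK hstep _ _ (hv _))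
    (abs_sum_sub_proj_sub_le hp hδ ha hx hy)

end Grid

/-- δ-Lipschitz-type bound for the extension of a grid function. -/
theorem stmt8 (n : ℕ) (hn : 1 ≤ n) (p a : Fin n → ℝ)
    (hp : ∀ i, 0 < p i) (ha : ∀ i, 0 < a i)
    (c lam δ : ℝ) (hc : 0 < c) (hlam : 0 < lam) (hδ : 0 < δ)
    (v : (Fin n → ℕ) → ℝ) (hv0 : ∀ m, 0 ≤ v m)
    (hv1 : ∀ (m : Fin n → ℕ) (i : Fin n),
      a i * p i * δ ≤ v (m + Pi.single i 1) - v m)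
    (hv2 : ∀ m : Fin n → ℕ,
      v (m + 1) - v m ≤ v m * (Real.exp ((c + lam) * δ) - 1)) :
    ∀ x y : Fin n → ℝ, 0 ≤ x → 0 ≤ y →
      |Vext n p a δ v y - Vext n p a δ v x| ≤
        (∑ i, |proj n p δ y i - proj n p δ x i|) * (2 / ⨅ i, p i) *
          Vext n p a δ v (proj n p δ (x ⊔ y)) *
          ((Real.exp ((c + lam) * δ) - 1) / δ) +
        2 * δ * ∑ i, a i * p i := by
  intro x y hx hy
  set K := Real.exp ((c + lam) * δ) - 1
  have hK : 0 ≤ K := sub_nonneg.2 (Real.one_le_exp (by positivity))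
  have hmono : Monotone v := monotone_of_le_add_single fun m i => by
    linarith [hv1 m i, mul_pos (mul_pos (ha i) (hp i)) hδ]
  have hstep : ∀ m i, v (m + Pi.single i 1) - v m ≤ K * v m := fun m i => by
    have hle : m + Pi.single i 1 ≤ m + 1 := add_le_add_right (Pi.single_one_le_one i) m
    linarith [hv2 m, hmono hle]
  have hP : 0 < ⨅ i, p i := by
    have : Nonempty (Fin n) := ⟨⟨0, hn⟩⟩
    obtain ⟨i, hi⟩ := Finite.exists_min p
    exact (hp i).trans_le (le_ciInf hi)
  have hV := abs_Vext_sub_Vext_le hp hδ (fun i => (ha i).le) hmono hK hstep hv0 hx hy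
  have hSL := iInf_mul_sum_abs_sub_rho_le hp hδ x y
  rw [Vext_proj hp hδ, rho_sup hp hδ]
  set S := ∑ i, |(rho n p δ y i : ℝ) - rho n p δ x i|
  set L := ∑ i, |proj n p δ y i - proj n p δ x i|
  set P := ⨅ i, p i
  set X := K * v (rho n p δ x ⊔ rho n p δ y)
  have hS : S ≤ L / (P * δ) := (le_div_iff₀ (mul_pos hP hδ)).2 (by linarith)
  have hX : 0 ≤ X := mul_nonneg hK (hv0 _)
  have hap : 0 ≤ ∑ i, a i * p i := Finset.sum_nonneg fun i _ => (mul_pos (ha i) (hp i)).le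
  have hLX : S * X ≤ L / (P * δ) * X := mul_le_mul_of_nonneg_right hS hX
  have hLX₀ : 0 ≤ L / (P * δ) * X := by positivity
  calc |Vext n p a δ v y - Vext n p a δ v x|
      ≤ 2 * (L / (P * δ) * X) + 2 * δ * ∑ i, a i * p i := by
        linarith [mul_nonneg hδ.le hap]
    _ = L * (2 / P) * v (rho n p δ x ⊔ rho n p δ y) * (K / δ) + 2 * δ * ∑ i, a i * p i := by
      simp only [X]
      field_simp

end
end

section
/- Let δ > 0, let (τ_j)_{j≥1} be a strictly increasing sequence of positive reals with τ_j → ∞, and set τ_0 = 0. Let (s_l)_{l≥1} be a nondecreasing sequence of nonnegative reals and (i_l)_{l≥1} a sequence of integers with i_l ≥ l for all l, such that for every l, s_l ≥ τ_{j_l} + (i_l − j_l)δ, where j_l := max{ j ≥ 0 : τ_j ≤ s_l }. Then s_l → ∞ as l → ∞. -/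
open Filter

/-- the action times of the discrete scheme tend to infinity. -/
theorem stmt13 (δ : ℝ) (hδ : 0 < δ)
    (τ : ℕ → ℝ) (hτ0 : τ 0 = 0) (hτpos : ∀ j, 1 ≤ j → 0 < τ j)
    (hτmono : ∀ j, 1 ≤ j → τ j < τ (j + 1))
    (hτtop : Tendsto τ atTop atTop)
    (s : ℕ → ℝ) (hs0 : ∀ l, 0 ≤ s l) (hsmono : Monotone s)
    (i : ℕ → ℕ) (hi : ∀ l, l ≤ i l)
    (hkey : ∀ l, τ (sSup {j | τ j ≤ s l}) +
      ((i l : ℝ) - ((sSup {j | τ j ≤ s l} : ℕ) : ℝ)) * δ ≤ s l) :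
    Tendsto s atTop atTop := by
  have hτnn : ∀ j, 0 ≤ τ j := by
    intro j
    rcases Nat.eq_zero_or_pos j with h | h
    · simp [h, hτ0]
    · exact (hτpos j h).le
  rcases tendsto_of_monotone hsmono with h | ⟨L, hL⟩
  · exact h
  exfalso
  have hsle : ∀ l, s l ≤ L := hsmono.ge_of_tendsto hL
  obtain ⟨J, hJ⟩ := (hτtop.eventually_gt_atTop L).exists_forall_of_atTop
  -- For each l, the sup j_l satisfies j_l ≤ J
  have hjle : ∀ l, sSup {j | τ j ≤ s l} ≤ J := by
    intro l
    by_contra h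
    push_neg at h
    -- the set is nonempty and bounded above
    have hne : ({j | τ j ≤ s l} : Set ℕ).Nonempty := ⟨0, by simp [hτ0, hs0 l]⟩
    have hbdd : BddAbove ({j | τ j ≤ s l} : Set ℕ) := by
      refine ⟨J, fun j hj => ?_⟩
      by_contra hj'
      push_neg at hj'
      exact absurd hj (not_le.mpr (lt_of_le_of_lt (hsle l) (hJ j hj'.le)))
    have hmem := Nat.sSup_mem hne hbdd
    exact absurd hmem (not_le.mpr (lt_of_le_of_lt (hsle l) (hJ _ h.le)))
  obtain ⟨n, hn⟩ := exists_nat_gt (L / δ)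
  have hnδ : L < (n : ℝ) * δ := by
    rwa [div_lt_iff₀ hδ] at hn
  set l := J + n with hl
  have hkl := hkey l
  set jl := sSup {j | τ j ≤ s l} with hjl
  have h1 : (n : ℝ) ≤ (i l : ℝ) - (jl : ℝ) := by
    have h2 : (jl : ℝ) ≤ (J : ℝ) := by exact_mod_cast hjle l
    have h3 : (l : ℝ) ≤ (i l : ℝ) := by exact_mod_cast hi l
    have h4 : (l : ℝ) = (J : ℝ) + n := by exact_mod_cast rfl
    linarith
  have : (n : ℝ) * δ ≤ s l := by
    have := mul_le_mul_of_nonneg_right h1 hδ.le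
    have h0 := hτnn jl
    linarith
  exact absurd (hsle l) (not_le.mpr (lt_of_lt_of_le hnδ this))
end
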